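/- arXiv:2102.03583 — 9 statements merged into one kernel-verified Lean document; each statement's English description precedes it below -/
import Mathlib

section
/- Let A = K[x]/(x^d) and let s be a linearly recurrent sequence in A^n of order δ (the minimal degree of a monic canceling polynomial). For any e ∈ ℤ_{>0} and any p ∈ A[y] with deg(p) ≤ e − δ, the polynomial p cancels the whole sequence s if and only if p cancels the partial sequence (s_0, ..., s_{e−1}), i.e., writing p = p_0 + ... + p_γ y^γ, we have p_0 s_k + ... + p_γ s_{k+γ} = 0 for all 0 ≤ k < e − γ. -/
set_option synthInstance.maxHeartbeats 1000000
set_option maxHeartbeats 1000000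

open Polynomial

/-- The ring `A = K[x]/(x^d)` of truncated polynomials. -/
abbrev TP (K : Type) [Field K] (d : ℕ) :=
  Polynomial K ⧸ Ideal.span {(X : Polynomial K) ^ d}

/-- A polynomial `P = Σ p_i y^i ∈ R[y]` cancels the sequence `s` of vectors in `R^n`
if `Σ_i p_i s_{k+i} = 0` for all `k ≥ 0`. -/
def Cancels {R : Type*} [CommRing R] {n : ℕ} (P : Polynomial R)
    (s : ℕ → Fin n → R) : Prop :=
  ∀ k : ℕ, ∑ i ∈ Finset.range (P.natDegree + 1), P.coeff i • s (k + i) = 0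

/-- `P` cancels the partial sequence `(s_0, ..., s_{e-1})`:
the recurrence holds for all `k` with `k + deg P < e`. -/
def CancelsPartial {R : Type*} [CommRing R] {n : ℕ} (P : Polynomial R)
    (s : ℕ → Fin n → R) (e : ℕ) : Prop :=
  ∀ k : ℕ, k + P.natDegree < e →
    ∑ i ∈ Finset.range (P.natDegree + 1), P.coeff i • s (k + i) = 0

/-- For `s` linearly recurrent of order `δ` and `p` of degree at most `e - δ`,
`p` cancels the whole sequence iff it cancels the partial sequence of the first
`e` terms. -/
theorem stmt3 (K : Type) [Field K] (d : ℕ) (hd : 0 < d) (n : ℕ)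
    (s : ℕ → Fin n → TP K d) (δ : ℕ)
    (hδ : IsLeast {γ : ℕ | ∃ P : Polynomial (TP K d),
      P.Monic ∧ P.natDegree = γ ∧ Cancels P s} δ)
    (e : ℕ) (he : 0 < e) (p : Polynomial (TP K d)) (hp : p.natDegree + δ ≤ e) :
    Cancels p s ↔ CancelsPartial p s e := by
  obtain ⟨⟨M, hM, hMdeg, hMc⟩, -⟩ := hδ
  constructor
  · intro h k _
    exact h k
  · intro h
    set t : ℕ → Fin n → TP K d :=
      fun k => ∑ i ∈ Finset.range (p.natDegree + 1), p.coeff i • s (k + i) with ht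
    have ht0 : ∀ k, k < δ → t k = 0 := fun k hk => h k (by omega)
    have hMt : ∀ k, ∑ j ∈ Finset.range (δ + 1), M.coeff j • t (k + j) = 0 := by
      intro k
      have : ∑ j ∈ Finset.range (δ + 1), M.coeff j • t (k + j)
          = ∑ i ∈ Finset.range (p.natDegree + 1), p.coeff i •
              (∑ j ∈ Finset.range (M.natDegree + 1), M.coeff j • s ((k + i) + j)) := by
        rw [hMdeg]
        simp only [ht, Finset.smul_sum]
        rw [Finset.sum_comm]
        apply Finset.sum_congr rfl
        intro i _
        apply Finset.sum_congr rfl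
        intro j _
        rw [show k + j + i = k + i + j from by omega]
        exact smul_comm _ _ _
      rw [this]
      apply Finset.sum_eq_zero
      intro i _
      rw [hMc (k + i), smul_zero]
    suffices hts : ∀ k, t k = 0 by intro k; exact hts k
    intro k
    induction k using Nat.strong_induction_on with
    | _ k ih =>
      rcases lt_or_ge k δ with hk | hk
      · exact ht0 k hk
      · have hm := hMt (k - δ)
        rw [Finset.sum_range_succ] at hm
        have hcoef : M.coeff δ = 1 := by
          rw [← hMdeg]; exact hM
        have hzero : ∑ j ∈ Finset.range δ, M.coeff j • t (k - δ + j) = 0 := by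
          apply Finset.sum_eq_zero
          intro j hj
          rw [ih (k - δ + j) (by simp only [Finset.mem_range] at hj; omega), smul_zero]
        rw [hzero, hcoef, zero_add, one_smul] at hm
        have : k - δ + δ = k := by omega
        rwa [this] at hm
end

section
/- Let A = K[x]/(x^d) and let s be a linearly recurrent sequence in A^n of order δ. For e ≥ δ, define the block-Hankel matrix H(s,e) ∈ A^{(e+1)×(e·n)} whose (i,j)-th block entry is s_{i+j} (for 0 ≤ i ≤ e, 0 ≤ j < e, entries regarded as row vectors in A^n). Then the set of polynomials p = p_0 + ... + p_e y^e with (p_0, ..., p_e)·H(s,e) = 0 equals Ann(s) ∩ A[y]_{≤e} (the canceling polynomials of degree at most e). In particular this set generates the ideal Ann(s). -/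
set_option synthInstance.maxHeartbeats 1000000
set_option maxHeartbeats 1000000

open Polynomial

section Aux
variable {R : Type*} [CommRing R] {n : ℕ}

/-- The shift operator on sequences. -/
def shiftE (R : Type*) [CommRing R] (n : ℕ) : Module.End R (ℕ → Fin n → R) where
  toFun f k := f (k + 1)
  map_add' _ _ := rfl
  map_smul' _ _ := rfl

lemma shiftE_pow (i : ℕ) (f : ℕ → Fin n → R) (k : ℕ) :
    ((shiftE R n ^ i) f) k = f (k + i) := by
  induction i generalizing f k with
  | zero => simp
  | succ m ih =>
    rw [pow_succ, Module.End.mul_apply, ih]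
    simp [shiftE, add_assoc]

lemma aeval_shift_apply (p : Polynomial R) (s : ℕ → Fin n → R) (N : ℕ)
    (hN : p.natDegree < N) (k : ℕ) :
    ((aeval (shiftE R n) p) s) k = ∑ i ∈ Finset.range N, p.coeff i • s (k + i) := by
  rw [aeval_eq_sum_range' hN]
  simp [LinearMap.sum_apply, Finset.sum_apply, shiftE_pow]

lemma cancels_iff (p : Polynomial R) (s : ℕ → Fin n → R) :
    Cancels p s ↔ (aeval (shiftE R n) p) s = 0 := by
  constructor
  · intro h
    funext k
    rw [aeval_shift_apply p s (p.natDegree + 1) (Nat.lt_succ_self _) k]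
    exact h k
  · intro h k
    have := congrFun h k
    rwa [aeval_shift_apply p s (p.natDegree + 1) (Nat.lt_succ_self _) k] at this

lemma cancels_mul (p q : Polynomial R) (s : ℕ → Fin n → R) (h : Cancels p s) :
    Cancels (q * p) s := by
  rw [cancels_iff] at h ⊢
  rw [map_mul, Module.End.mul_apply, h, map_zero]

end Aux


/-- Kernel of the block-Hankel matrix `H(s,e) ∈ A^{(e+1) × (e·n)}`, whose entry at
row `i` and column `(j, l)` is `(s_{i+j})_l`: for `e ≥ δ`, the polynomials
`p = p_0 + ... + p_e y^e` with `(p_0, ..., p_e) · H(s,e) = 0` are exactly the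
canceling polynomials of degree at most `e`; in particular they generate `Ann(s)`. -/
theorem stmt4 (K : Type) [Field K] (d : ℕ) (hd : 0 < d) (n : ℕ)
    (s : ℕ → Fin n → TP K d) (δ : ℕ)
    (hδ : IsLeast {γ : ℕ | ∃ P : Polynomial (TP K d),
      P.Monic ∧ P.natDegree = γ ∧ Cancels P s} δ)
    (e : ℕ) (he : δ ≤ e) :
    ({p : Polynomial (TP K d) | p.natDegree ≤ e ∧
        Matrix.vecMul (fun i : Fin (e + 1) => p.coeff i)
          (Matrix.of fun (i : Fin (e + 1)) (jl : Fin e × Fin n) =>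
            s ((i : ℕ) + (jl.1 : ℕ)) jl.2) = 0}
      = {p : Polynomial (TP K d) | p.natDegree ≤ e ∧ Cancels p s}) ∧
    Ideal.span {p : Polynomial (TP K d) | p.natDegree ≤ e ∧
        Matrix.vecMul (fun i : Fin (e + 1) => p.coeff i)
          (Matrix.of fun (i : Fin (e + 1)) (jl : Fin e × Fin n) =>
            s ((i : ℕ) + (jl.1 : ℕ)) jl.2) = 0}
      = Ideal.span {p : Polynomial (TP K d) | Cancels p s} := by
  obtain ⟨P, hPmon, hPdeg, hPc⟩ := hδ.1
  -- the matrix entry equals the evaluation of `p` at the shift, applied to `s`, at row index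
  have key : ∀ p : Polynomial (TP K d), p.natDegree ≤ e → ∀ (j : Fin e) (l : Fin n),
      Matrix.vecMul (fun i : Fin (e + 1) => p.coeff i)
        (Matrix.of fun (i : Fin (e + 1)) (jl : Fin e × Fin n) =>
          s ((i : ℕ) + (jl.1 : ℕ)) jl.2) (j, l)
      = ((aeval (shiftE (TP K d) n) p) s) (j : ℕ) l := by
    intro p hp j l
    rw [aeval_shift_apply p s (e + 1) (Nat.lt_succ_of_le hp)]
    simp only [Matrix.vecMul, dotProduct, Matrix.of_apply, Finset.sum_apply,
      Pi.smul_apply, smul_eq_mul]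
    rw [← Fin.sum_univ_eq_sum_range (fun i => p.coeff i * s ((j : ℕ) + i) l)]
    exact Finset.sum_congr rfl fun i _ => by simp only [add_comm (i : ℕ) (j : ℕ)]
  have hset : {p : Polynomial (TP K d) | p.natDegree ≤ e ∧
        Matrix.vecMul (fun i : Fin (e + 1) => p.coeff i)
          (Matrix.of fun (i : Fin (e + 1)) (jl : Fin e × Fin n) =>
            s ((i : ℕ) + (jl.1 : ℕ)) jl.2) = 0}
      = {p : Polynomial (TP K d) | p.natDegree ≤ e ∧ Cancels p s} := by
    ext p
    simp only [Set.mem_setOf_eq]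
    constructor
    · rintro ⟨hp, hker⟩
      refine ⟨hp, ?_⟩
      set t : ℕ → Fin n → TP K d := (aeval (shiftE (TP K d) n) p) s with ht
      have tsmall : ∀ j : ℕ, j < e → t j = 0 := by
        intro j hj
        funext l
        have := congrFun hker (⟨j, hj⟩, l)
        rw [key p hp ⟨j, hj⟩ l] at this
        simpa using this
      have trec : ∀ k : ℕ, ∑ i ∈ Finset.range (δ + 1), P.coeff i • t (k + i) = 0 := by
        intro k
        have h0 : (aeval (shiftE (TP K d) n) P) t = 0 := by
          rw [ht, ← Module.End.mul_apply, ← map_mul, mul_comm, map_mul,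
            Module.End.mul_apply, (cancels_iff P s).1 hPc, map_zero]
        have := congrFun h0 k
        rwa [aeval_shift_apply P t (δ + 1) (by omega) k] at this
      have tzero : ∀ k : ℕ, t k = 0 := by
        intro k
        induction k using Nat.strong_induction_on with
        | _ k ih =>
          by_cases hk : k < e
          · exact tsmall k hk
          · push_neg at hk
            have hδk : δ ≤ k := le_trans he hk
            have h2 := trec (k - δ)
            rw [Finset.sum_range_succ] at h2
            have hc : P.coeff δ = 1 := by
              have := hPmon.leadingCoeff
              rwa [Polynomial.leadingCoeff, hPdeg] at this
            have hkk : k - δ + δ = k := Nat.sub_add_cancel hδk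
            rw [hc, one_smul, hkk] at h2
            have hz : ∑ i ∈ Finset.range δ, P.coeff i • t (k - δ + i) = 0 := by
              apply Finset.sum_eq_zero
              intro i hi
              rw [Finset.mem_range] at hi
              rw [ih (k - δ + i) (by omega), smul_zero]
            rw [hz, zero_add] at h2
            exact h2
      rw [cancels_iff]
      funext k
      exact tzero k
    · rintro ⟨hp, hc⟩
      refine ⟨hp, ?_⟩
      funext jl
      obtain ⟨j, l⟩ := jl
      rw [key p hp j l, (cancels_iff p s).1 hc]
      rfl
  refine ⟨hset, ?_⟩
  rw [hset]
  apply le_antisymm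
  · exact Ideal.span_mono fun p hp => hp.2
  · rw [Ideal.span_le]
    intro p hp
    simp only [Set.mem_setOf_eq] at hp
    -- divide by the monic polynomial P
    have hr : p %ₘ P + P * (p /ₘ P) = p := Polynomial.modByMonic_add_div p P
    have hrdeg : (p %ₘ P).natDegree ≤ e :=
      le_trans (le_trans (Polynomial.natDegree_modByMonic_le p hPmon) (le_of_eq hPdeg)) he
    have hrc : Cancels (p %ₘ P) s := by
      have heq : p %ₘ P = p - (p /ₘ P) * P := by
        rw [mul_comm P (p /ₘ P)] at hr
        linear_combination hr
      rw [heq, cancels_iff, map_sub, LinearMap.sub_apply]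
      rw [(cancels_iff p s).1 hp]
      have := (cancels_iff ((p /ₘ P) * P) s).1 (cancels_mul P (p /ₘ P) s hPc)
      rw [this]
      simp
    have hPmem : P ∈ Ideal.span {p : Polynomial (TP K d) | p.natDegree ≤ e ∧ Cancels p s} :=
      Ideal.subset_span ⟨le_trans (le_of_eq hPdeg) he, hPc⟩
    have hrmem : p %ₘ P ∈ Ideal.span {p : Polynomial (TP K d) | p.natDegree ≤ e ∧ Cancels p s} :=
      Ideal.subset_span ⟨hrdeg, hrc⟩
    have hmem : p %ₘ P + P * (p /ₘ P) ∈
        Ideal.span {p : Polynomial (TP K d) | p.natDegree ≤ e ∧ Cancels p s} :=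
      Ideal.add_mem _ hrmem (by have := Ideal.mul_mem_left _ (p /ₘ P) hPmem; rwa [mul_comm (p /ₘ P) P] at this)
    rw [hr] at hmem
    exact hmem
end

section
/- Let A = K[x]/(x^d) and let s be a linearly recurrent sequence in A^n. Then the ideal Ann(s) of A[y] admits a generating set consisting of polynomials all of degree at most δ, where δ is the order of s. -/
set_option synthInstance.maxHeartbeats 1000000
set_option maxHeartbeats 1000000

open Polynomial

section Aux

variable {R : Type*} [CommRing R] {n : ℕ} {s : ℕ → Fin n → R}

lemma cancels_def {P : Polynomial R} :
    Cancels P s ↔ ∀ N, P.natDegree < N → ∀ k,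
      ∑ i ∈ Finset.range N, P.coeff i • s (k + i) = 0 := by
  constructor
  · intro h N hN k
    have hsub : Finset.range (P.natDegree + 1) ⊆ Finset.range N :=
      Finset.range_subset_range.mpr hN
    have heq := Finset.sum_subset hsub (f := fun i => P.coeff i • s (k + i))
      (fun i hi hni => by
        show P.coeff i • s (k + i) = 0
        rw [Polynomial.coeff_eq_zero_of_natDegree_lt
          (by simp only [Finset.mem_range] at hni; omega), zero_smul])
    rw [← heq]; exact h k
  · intro h k
    exact h _ (Nat.lt_succ_self _) k

lemma cancels_extend {P : Polynomial R} {N M : ℕ} (hN : P.natDegree < N) (hNM : N ≤ M)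
    (k : ℕ) :
    ∑ i ∈ Finset.range N, P.coeff i • s (k + i)
      = ∑ i ∈ Finset.range M, P.coeff i • s (k + i) :=
  Finset.sum_subset (Finset.range_subset_range.mpr hNM)
    (fun i hi hni => by
      show P.coeff i • s (k + i) = 0
      rw [Polynomial.coeff_eq_zero_of_natDegree_lt
        (by simp only [Finset.mem_range] at hni; omega), zero_smul])

lemma cancels_add {P Q : Polynomial R} (hP : Cancels P s) (hQ : Cancels Q s) :
    Cancels (P + Q) s := by
  rw [cancels_def] at hP hQ ⊢
  intro N hN k
  rw [cancels_extend hN (le_max_left N (max (P.natDegree + 1) (Q.natDegree + 1))) k]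
  have h1 : ∀ i, (P + Q).coeff i • s (k + i)
      = P.coeff i • s (k + i) + Q.coeff i • s (k + i) := by
    intro i; rw [Polynomial.coeff_add, add_smul]
  simp only [h1, Finset.sum_add_distrib]
  rw [hP _ (by omega) k, hQ _ (by omega) k, add_zero]

lemma cancels_C_mul {P : Polynomial R} (c : R) (hP : Cancels P s) :
    Cancels (Polynomial.C c * P) s := by
  rw [cancels_def] at hP ⊢
  intro N hN k
  rw [cancels_extend hN (le_max_left N (P.natDegree + 1)) k]
  have h1 : ∀ i, (Polynomial.C c * P).coeff i • s (k + i)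
      = c • (P.coeff i • s (k + i)) := by
    intro i; rw [Polynomial.coeff_C_mul, mul_smul]
  simp only [h1, ← Finset.smul_sum]
  rw [hP _ (by omega) k, smul_zero]

lemma cancels_X_mul {P : Polynomial R} (hP : Cancels P s) :
    Cancels (Polynomial.X * P) s := by
  rw [cancels_def] at hP ⊢
  intro N hN k
  obtain ⟨M', hM'⟩ : ∃ M', max N (P.natDegree + 2) = M' + 1 :=
    ⟨max N (P.natDegree + 2) - 1, by omega⟩
  rw [cancels_extend hN (le_max_left N (P.natDegree + 2)) k, hM',
    Finset.sum_range_succ']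
  simp only [Polynomial.coeff_X_mul]
  rw [Polynomial.mul_coeff_zero, Polynomial.coeff_X_zero, zero_mul, zero_smul, add_zero]
  have h2 : ∀ i ∈ Finset.range M', P.coeff i • s (k + (i + 1))
      = P.coeff i • s ((k + 1) + i) := by
    intro i _; rw [show k + (i + 1) = (k + 1) + i by omega]
  rw [Finset.sum_congr rfl h2]
  exact hP M' (by omega) (k + 1)

lemma cancels_mul_s5 {P : Polynomial R} (Q : Polynomial R) (hP : Cancels P s) :
    Cancels (Q * P) s := by
  induction Q using Polynomial.induction_on with
  | C a => exact cancels_C_mul a hP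
  | add p q hp hq => rw [add_mul]; exact cancels_add hp hq
  | monomial m a ih =>
      have h : Polynomial.C a * Polynomial.X ^ (m + 1) * P
          = Polynomial.X * (Polynomial.C a * Polynomial.X ^ m * P) := by ring
      rw [h]; exact cancels_X_mul ih

end Aux

/-- The annihilator ideal of a linearly recurrent sequence of order `δ` admits a
generating set consisting of polynomials of degree at most `δ`. -/
theorem stmt5 (K : Type) [Field K] (d : ℕ) (hd : 0 < d) (n : ℕ)
    (s : ℕ → Fin n → TP K d) (δ : ℕ)
    (hδ : IsLeast {γ : ℕ | ∃ P : Polynomial (TP K d),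
      P.Monic ∧ P.natDegree = γ ∧ Cancels P s} δ) :
    ∃ S : Set (Polynomial (TP K d)), (∀ P ∈ S, P.natDegree ≤ δ) ∧
      Ideal.span S = Ideal.span {P : Polynomial (TP K d) | Cancels P s} := by
  obtain ⟨⟨Mo, hMo, hMd, hMc⟩, -⟩ := hδ
  have hnt : Nontrivial (TP K d) := by
    apply Ideal.Quotient.nontrivial_iff.mpr
    intro h
    rw [Ideal.span_singleton_eq_top] at h
    have h2 := Polynomial.natDegree_eq_zero_of_isUnit h
    rw [Polynomial.natDegree_X_pow] at h2
    omega
  refine ⟨{P | Cancels P s ∧ P.natDegree ≤ δ}, fun P hP => hP.2, ?_⟩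
  apply le_antisymm
  · exact Ideal.span_mono (fun P hP => hP.1)
  · rw [Ideal.span_le]
    intro P hP
    have hPc : Cancels P s := hP
    have hmod : Cancels (P %ₘ Mo) s := by
      have h1 : P %ₘ Mo = P + (-(P /ₘ Mo)) * Mo := by
        have h := Polynomial.modByMonic_add_div P Mo
        linear_combination h
      rw [h1]
      exact cancels_add hPc (cancels_mul_s5 _ hMc)
    have hdeg : (P %ₘ Mo).natDegree ≤ δ := by
      have h1 := Polynomial.degree_modByMonic_lt P hMo
      have h2 := Polynomial.natDegree_le_natDegree h1.le
      rw [hMd] at h2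
      exact h2
    have hmem : P %ₘ Mo ∈ Ideal.span {P : Polynomial (TP K d) | Cancels P s ∧ P.natDegree ≤ δ} :=
      Ideal.subset_span ⟨hmod, hdeg⟩
    have hMomem : Mo ∈ Ideal.span {P : Polynomial (TP K d) | Cancels P s ∧ P.natDegree ≤ δ} :=
      Ideal.subset_span ⟨hMc, hMd.le⟩
    have hPeq : P = P %ₘ Mo + Mo * (P /ₘ Mo) := (Polynomial.modByMonic_add_div P Mo).symm
    rw [hPeq]
    exact Ideal.add_mem _ hmem (mul_comm (P /ₘ Mo) Mo ▸ Ideal.mul_mem_left _ (P /ₘ Mo) hMomem)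
end

section
/- Let A = K[x]/(x^d) and let s be a linearly recurrent sequence in A^n of order δ. For e ≥ δ, define G = Σ_{j<2e} s_j y^{2e−1−j} ∈ (A[y])^n and P(s,e) = { p ∈ A[y] of degree ≤ e such that p·G ≡ q mod y^{2e} for some q ∈ (A[y])^n with deg(q) < e }. Then P(s,e) = Ann(s) ∩ A[y]_{≤e}, and for any p ∈ P(s,e) the corresponding q satisfies deg(q) < deg(p). -/
set_option synthInstance.maxHeartbeats 1000000
set_option maxHeartbeats 1000000

open Polynomial

/-- If a sequence `T` satisfies a linear recurrence with unit (=1) top coefficient of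
order `δ ≤ e` and vanishes for indices `< e`, it vanishes everywhere. -/
lemma key_ind {R : Type*} [CommRing R] {δ e : ℕ} (hδe : δ ≤ e) (Mc : ℕ → R)
    (hMδ : Mc δ = 1) (T : ℕ → R)
    (hrec : ∀ k, ∑ j ∈ Finset.range (δ + 1), Mc j * T (k + j) = 0)
    (h0 : ∀ k < e, T k = 0) : ∀ k, T k = 0 := by
  intro k
  induction k using Nat.strong_induction_on with
  | _ k ih =>
    by_cases hk : k < e
    · exact h0 k hk
    · push_neg at hk
      have hδk : δ ≤ k := hδe.trans hk
      have h := hrec (k - δ)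
      rw [Finset.sum_range_succ, Nat.sub_add_cancel hδk, hMδ, one_mul] at h
      have hz : ∑ j ∈ Finset.range δ, Mc j * T (k - δ + j) = 0 := by
        apply Finset.sum_eq_zero
        intro j hj
        rw [Finset.mem_range] at hj
        rw [ih (k - δ + j) (by omega), mul_zero]
      rw [hz, zero_add] at h
      exact h

lemma coeff_G_aux {R : Type*} [CommRing R] {n : ℕ} (s : ℕ → Fin n → R) (e : ℕ)
    (G : Fin n → Polynomial R)
    (hG : ∀ l, G l = ∑ j ∈ Finset.range (2 * e), C (s j l) * X ^ (2 * e - 1 - j))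
    (l : Fin n) (c : ℕ) (hc : c < 2 * e) : (G l).coeff c = s (2 * e - 1 - c) l := by
  rw [hG, finset_sum_coeff]
  rw [Finset.sum_eq_single_of_mem (2 * e - 1 - c) (Finset.mem_range.mpr (by omega))]
  · rw [coeff_C_mul, coeff_X_pow, if_pos (by omega), mul_one]
  · intro j hj hjne
    rw [Finset.mem_range] at hj
    rw [coeff_C_mul, coeff_X_pow, if_neg (by omega), mul_zero]

lemma coeff_pG_aux {R : Type*} [CommRing R] {n : ℕ} (s : ℕ → Fin n → R) (e : ℕ)
    (G : Fin n → Polynomial R)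
    (hG : ∀ l, G l = ∑ j ∈ Finset.range (2 * e), C (s j l) * X ^ (2 * e - 1 - j))
    (p : Polynomial R) (l : Fin n) (m : ℕ) (hm1 : p.natDegree ≤ m) (hm2 : m < 2 * e) :
    (p * G l).coeff m
      = ∑ i ∈ Finset.range (p.natDegree + 1), p.coeff i * s (2 * e - 1 - m + i) l := by
  rw [coeff_mul, Finset.Nat.sum_antidiagonal_eq_sum_range_succ_mk]
  have hsub : Finset.range (p.natDegree + 1) ⊆ Finset.range (m + 1) :=
    Finset.range_subset_range.mpr (by omega)
  rw [← Finset.sum_subset hsub (by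
    intro i _ hi
    rw [Finset.mem_range] at hi
    rw [Polynomial.coeff_eq_zero_of_natDegree_lt (by omega), zero_mul])]
  apply Finset.sum_congr rfl
  intro i hi
  rw [Finset.mem_range] at hi
  rw [coeff_G_aux s e G hG l (m - i) (by omega)]
  congr 2
  omega

/-- Bivariate Padé characterization: with `G = Σ_{j < 2e} s_j y^{2e-1-j} ∈ (A[y])^n`,
the set `P(s,e)` of polynomials `p` of degree at most `e` such that `p·G ≡ q mod y^{2e}`
for some vector `q` of polynomials of degree `< e` equals the set of canceling
polynomials of degree at most `e`; moreover for any such nonzero `p` the corresponding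
`q` satisfies `deg q < deg p`. -/
theorem stmt6 (K : Type) [Field K] (d : ℕ) (hd : 0 < d) (n : ℕ)
    (s : ℕ → Fin n → TP K d) (δ : ℕ)
    (hδ : IsLeast {γ : ℕ | ∃ P : Polynomial (TP K d),
      P.Monic ∧ P.natDegree = γ ∧ Cancels P s} δ)
    (e : ℕ) (he : δ ≤ e)
    (G : Fin n → Polynomial (TP K d))
    (hG : ∀ l, G l = ∑ j ∈ Finset.range (2 * e), C (s j l) * X ^ (2 * e - 1 - j)) :
    ({p : Polynomial (TP K d) | p.natDegree ≤ e ∧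
        ∃ q : Fin n → Polynomial (TP K d), (∀ l, (q l).degree < (e : WithBot ℕ)) ∧
          ∀ l, (X : Polynomial (TP K d)) ^ (2 * e) ∣ (p * G l - q l)}
      = {p : Polynomial (TP K d) | p.natDegree ≤ e ∧ Cancels p s}) ∧
    (∀ (p : Polynomial (TP K d)) (q : Fin n → Polynomial (TP K d)),
      p ≠ 0 → p.natDegree ≤ e → (∀ l, (q l).degree < (e : WithBot ℕ)) →
      (∀ l, (X : Polynomial (TP K d)) ^ (2 * e) ∣ (p * G l - q l)) →
      ∀ l, (q l).degree < p.degree) := by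
  obtain ⟨⟨M, hM, hMdeg, hMC⟩, -⟩ := hδ
  -- pointwise form of the cancellation property of M
  have hMCl : ∀ k l, ∑ j ∈ Finset.range (δ + 1), M.coeff j * s (k + j) l = 0 := by
    intro k l
    have := congrFun (hMC k) l
    rw [hMdeg] at this
    simpa [Finset.sum_apply] using this
  have hMδ1 : M.coeff δ = 1 := by rw [← hMdeg]; exact hM.coeff_natDegree
  have hcoeff := coeff_pG_aux s e G hG
  -- main set equality
  have hmain : ({p : Polynomial (TP K d) | p.natDegree ≤ e ∧
        ∃ q : Fin n → Polynomial (TP K d), (∀ l, (q l).degree < (e : WithBot ℕ)) ∧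
          ∀ l, (X : Polynomial (TP K d)) ^ (2 * e) ∣ (p * G l - q l)}
      = {p : Polynomial (TP K d) | p.natDegree ≤ e ∧ Cancels p s}) := by
    ext p
    simp only [Set.mem_setOf_eq]
    constructor
    · rintro ⟨hpe, q, hqdeg, hdvd⟩
      refine ⟨hpe, ?_⟩
      intro k
      funext l
      have hgoal : ∀ k', (∑ i ∈ Finset.range (p.natDegree + 1),
          p.coeff i * s (k' + i) l) = 0 := by
        apply key_ind he M.coeff hMδ1
        · -- the recurrence for T
          intro k'
          have swap : ∑ j ∈ Finset.range (δ + 1), M.coeff j *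
                ∑ i ∈ Finset.range (p.natDegree + 1), p.coeff i * s (k' + j + i) l
              = ∑ i ∈ Finset.range (p.natDegree + 1), p.coeff i *
                ∑ j ∈ Finset.range (δ + 1), M.coeff j * s (k' + i + j) l := by
            simp_rw [Finset.mul_sum]
            rw [Finset.sum_comm]
            apply Finset.sum_congr rfl
            intro i _
            apply Finset.sum_congr rfl
            intro j _
            rw [show k' + j + i = k' + i + j by ring]
            ring
          rw [swap]
          apply Finset.sum_eq_zero
          intro i _
          rw [hMCl (k' + i) l, mul_zero]
        · -- vanishing for k0 < e
          intro k0 hk0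
          have he1 : 1 ≤ e := by omega
          have hm := hcoeff p l (2 * e - 1 - k0) (by omega) (by omega)
          have hidx : 2 * e - 1 - (2 * e - 1 - k0) = k0 := by omega
          rw [hidx] at hm
          -- coefficient of p*G at 2e-1-k0 is zero
          have hd := (Polynomial.X_pow_dvd_iff).mp (hdvd l) (2 * e - 1 - k0) (by omega)
          have hle : e ≤ 2 * e - 1 - k0 := by omega
          have hq0 : (q l).coeff (2 * e - 1 - k0) = 0 :=
            Polynomial.coeff_eq_zero_of_degree_lt
              (lt_of_lt_of_le (hqdeg l) (Nat.cast_le.mpr hle))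
          rw [Polynomial.coeff_sub, hq0, sub_zero] at hd
          rw [← hm]
          exact hd
      have := hgoal k
      simpa [Finset.sum_apply] using this
    · rintro ⟨hpe, hcan⟩
      have hcanl : ∀ k l, ∑ i ∈ Finset.range (p.natDegree + 1),
          p.coeff i * s (k + i) l = 0 := by
        intro k l
        have := congrFun (hcan k) l
        simpa [Finset.sum_apply] using this
      refine ⟨hpe, fun l => ∑ m ∈ Finset.range e, C ((p * G l).coeff m) * X ^ m, ?_, ?_⟩
      · intro l
        rw [Polynomial.degree_lt_iff_coeff_zero]
        intro m hm
        rw [finset_sum_coeff]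
        apply Finset.sum_eq_zero
        intro c hc
        rw [Finset.mem_range] at hc
        rw [coeff_C_mul, coeff_X_pow, if_neg (by omega), mul_zero]
      · intro l
        rw [Polynomial.X_pow_dvd_iff]
        intro m hm
        rw [Polynomial.coeff_sub, finset_sum_coeff]
        by_cases hme : m < e
        · rw [Finset.sum_eq_single_of_mem m (Finset.mem_range.mpr hme)]
          · rw [coeff_C_mul, coeff_X_pow, if_pos rfl, mul_one, sub_self]
          · intro c _ hcne
            rw [coeff_C_mul, coeff_X_pow, if_neg (by omega), mul_zero]
        · push_neg at hme
          have hz : ∀ c ∈ Finset.range e,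
              (C ((p * G l).coeff c) * X ^ c).coeff m = 0 := by
            intro c hc
            rw [Finset.mem_range] at hc
            rw [coeff_C_mul, coeff_X_pow, if_neg (by omega), mul_zero]
          rw [Finset.sum_eq_zero hz, sub_zero]
          rw [hcoeff p l m (by omega) hm]
          exact hcanl (2 * e - 1 - m) l
  refine ⟨hmain, ?_⟩
  intro p q hp0 hpe hqdeg hdvd l
  have hmem : p ∈ {p : Polynomial (TP K d) | p.natDegree ≤ e ∧ Cancels p s} := by
    rw [← hmain]; exact ⟨hpe, q, hqdeg, hdvd⟩
  obtain ⟨-, hcan⟩ := hmem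
  have hcanl : ∀ k, ∑ i ∈ Finset.range (p.natDegree + 1),
      p.coeff i * s (k + i) l = 0 := by
    intro k
    have := congrFun (hcan k) l
    simpa [Finset.sum_apply] using this
  rw [Polynomial.degree_eq_natDegree hp0]
  rw [Polynomial.degree_lt_iff_coeff_zero]
  intro m hm
  by_cases hme : e ≤ m
  · exact Polynomial.coeff_eq_zero_of_degree_lt
      (lt_of_lt_of_le (hqdeg l) (Nat.cast_le.mpr hme))
  · push_neg at hme
    have hd := (Polynomial.X_pow_dvd_iff).mp (hdvd l) m (by omega)
    rw [Polynomial.coeff_sub, sub_eq_zero] at hd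
    rw [← hd, hcoeff p l m hm (by omega)]
    exact hcanl (2 * e - 1 - m)
end

section
/- Let K be a field, F ∈ K[x]^{μ×ν}, and d a positive integer. Suppose C ∈ K[x]^{ν×r} and K' ∈ K[x]^{ν×(ν−r)} for some 0 ≤ r ≤ ν satisfy F·K' = 0 and the constant-coefficient matrix [C(0) K'(0)] ∈ K^{ν×ν} is invertible. Then r ≥ rank(F), and the approximant modules coincide: { p ∈ K[x]^{1×μ} : p·F ≡ 0 mod x^d } = { p ∈ K[x]^{1×μ} : p·F·C ≡ 0 mod x^d }. -/
set_option synthInstance.maxHeartbeats 1000000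
set_option maxHeartbeats 1000000

open Polynomial

/-- Compression of an approximation problem: if `F·K' = 0` and the constant matrix
`[C(0) K'(0)]` is invertible, then `r ≥ rank F` and the approximant modules of `F`
and of `F·C` at order `ord` coincide. -/
theorem stmt8 (K : Type) [Field K] (μ ν r : ℕ) (hr : r ≤ ν) (ord : ℕ) (hord : 0 < ord)
    (F : Matrix (Fin μ) (Fin ν) (Polynomial K))
    (C : Matrix (Fin ν) (Fin r) (Polynomial K))
    (K' : Matrix (Fin ν) (Fin (ν - r)) (Polynomial K))
    (hK : F * K' = 0)
    (hinv : IsUnit (Matrix.det (Matrix.of fun i j : Fin ν =>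
      if h2 : (j : ℕ) < r then (C i ⟨(j : ℕ), h2⟩).eval 0
      else (K' i ⟨(j : ℕ) - r, by have := j.isLt; omega⟩).eval 0))) :
    F.rank ≤ r ∧
    {p : Fin μ → Polynomial K |
        ∀ j, (X : Polynomial K) ^ ord ∣ Matrix.vecMul p F j}
      = {p : Fin μ → Polynomial K |
        ∀ j, (X : Polynomial K) ^ ord ∣ Matrix.vecMul p (F * C) j} := by
  classical
  set M : Matrix (Fin ν) (Fin ν) (Polynomial K) := Matrix.of fun i j =>
    if h2 : (j : ℕ) < r then C i ⟨(j : ℕ), h2⟩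
    else K' i ⟨(j : ℕ) - r, by have := j.isLt; omega⟩ with hM
  -- the evaluated matrix is the map of M
  have hMeval : (Matrix.of fun i j : Fin ν =>
      if h2 : (j : ℕ) < r then (C i ⟨(j : ℕ), h2⟩).eval 0
      else (K' i ⟨(j : ℕ) - r, by have := j.isLt; omega⟩).eval 0)
      = M.map (fun q => q.eval 0) := by
    ext i j
    by_cases h2 : (j : ℕ) < r <;> simp [hM, h2]
  have hdet0 : (M.det).eval 0 ≠ 0 := by
    have h1 : (evalRingHom (0 : K)) M.det = (M.map (evalRingHom (0 : K))).det :=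
      RingHom.map_det _ _
    have h2 : (M.map fun q => q.eval 0) = M.map (evalRingHom (0 : K)) := rfl
    rw [hMeval, h2, ← h1] at hinv
    simpa using hinv.ne_zero
  have hdetM : M.det ≠ 0 := fun h => hdet0 (by rw [h]; simp)
  have hXdvd : ¬ (X : Polynomial K) ∣ M.det := by
    rw [Polynomial.X_dvd_iff, Polynomial.coeff_zero_eq_eval_zero]
    exact hdet0
  -- F * M
  have hFM : F * M = Matrix.of (fun i (j : Fin ν) =>
      if h2 : (j : ℕ) < r then (F * C) i ⟨(j : ℕ), h2⟩ else 0) := by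
    refine Matrix.ext fun i j => ?_
    by_cases h2 : (j : ℕ) < r
    · simp [Matrix.mul_apply, hM, h2]
    · have h0 : (F * K') i ⟨(j : ℕ) - r, by have := j.isLt; omega⟩ = 0 := by
        rw [hK]; rfl
      simp only [Matrix.mul_apply, hM, Matrix.of_apply, h2, dif_neg, not_false_iff]
      rw [Matrix.mul_apply] at h0
      exact h0
  constructor
  · -- rank bound
    set Q := FractionRing (Polynomial K) with hQ
    set φ : Polynomial K →+* Q := (algebraMap (Polynomial K) Q : Polynomial K →+* Q) with hφdef
    have hφ : Function.Injective φ := IsFractionRing.injective _ _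
    set F' : Matrix (Fin μ) (Fin ν) Q := F.map φ with hF'
    set M' : Matrix (Fin ν) (Fin ν) Q := M.map φ with hM'
    have hdetM' : IsUnit M'.det := by
      have h1 : M'.det = φ M.det := (RingHom.map_det φ M).symm
      rw [h1, isUnit_iff_ne_zero]
      intro h
      exact hdetM (hφ (by simpa using h))
    set P : Matrix (Fin r) (Fin ν) Q := Matrix.of (fun k (j : Fin ν) =>
      if h2 : (j : ℕ) < r then (if k = ⟨(j : ℕ), h2⟩ then 1 else 0) else 0) with hP
    have hprod : F' * M' = ((F * C).map φ) * P := by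
      refine Matrix.ext fun i j => ?_
      have hmap : F' * M' = (F * M).map φ := (Matrix.map_mul).symm
      rw [hmap, hFM]
      by_cases h2 : (j : ℕ) < r
      · simp [Matrix.mul_apply, hP, h2, mul_ite, mul_one, mul_zero]
      · simp [Matrix.mul_apply, hP, h2]
    have hrank' : F'.rank ≤ r := by
      have h1 : (F' * M').rank = F'.rank :=
        Matrix.rank_mul_eq_left_of_isUnit_det M' F' hdetM'
      calc F'.rank = (F' * M').rank := h1.symm
        _ = (((F * C).map φ) * P).rank := by rw [hprod]
        _ ≤ ((F * C).map φ).rank := Matrix.rank_mul_le_left _ _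
        _ ≤ Fintype.card (Fin r) := Matrix.rank_le_card_width _
        _ = r := Fintype.card_fin r
    have hrankA : F.rank ≤ F'.rank := by
      set W := LinearMap.range F.mulVecLin with hW
      set W' := LinearMap.range F'.mulVecLin with hW'
      have hWrank : Module.rank (Polynomial K) W ≤ (F'.rank : Cardinal) := by
        apply rank_le
        intro s li
        set ψ : (Fin μ → Polynomial K) →ₗ[Polynomial K] (Fin μ → Q) :=
          LinearMap.compLeft (Algebra.linearMap (Polynomial K) Q) (Fin μ) with hψdef
        have hψ : Function.Injective ψ := fun a b hab => funext fun i => hφ (congrFun hab i)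
        set g : W →ₗ[Polynomial K] (Fin μ → Q) := ψ.comp W.subtype with hgdef
        have hg : Function.Injective g := hψ.comp (Submodule.injective_subtype W)
        have li2 : LinearIndependent (Polynomial K) (g ∘ fun i : s => (i : W)) :=
          li.map' g (LinearMap.ker_eq_bot.mpr hg)
        have li3 : LinearIndependent Q (g ∘ fun i : s => (i : W)) :=
          (LinearIndependent.iff_fractionRing (Polynomial K) Q).mp li2
        have hmem : ∀ v : W, g v ∈ W' := by
          rintro ⟨v, hv⟩
          obtain ⟨u, hu⟩ := hv
          refine ⟨fun i => φ (u i), ?_⟩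
          rw [Matrix.mulVecLin_apply] at hu ⊢
          funext i
          show Matrix.mulVec (F.map φ) (fun i => φ (u i)) i = φ (v i)
          rw [← hu]
          exact (RingHom.map_mulVec φ F u i).symm
        have li4 : LinearIndependent Q (fun i : s => (⟨g ↑i, hmem ↑i⟩ : W')) := by
          apply LinearIndependent.of_comp W'.subtype
          exact li3
        have hcard : Fintype.card s ≤ Module.finrank Q W' :=
          li4.fintype_card_le_finrank
        rw [Fintype.card_coe] at hcard
        have heq : Module.finrank Q ↥W' = F'.rank := rfl
        rw [heq] at hcard
        exact_mod_cast hcard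
      have h5 : Module.finrank (Polynomial K) ↥W ≤ F'.rank :=
        Module.finrank_le_of_rank_le hWrank
      exact h5
    exact hrankA.trans hrank'
  · -- set equality
    ext p
    simp only [Set.mem_setOf_eq]
    constructor
    · intro hp j
      rw [← Matrix.vecMul_vecMul]
      simp only [Matrix.vecMul, dotProduct]
      exact Finset.dvd_sum fun i _ => (hp i).mul_right _
    · intro hp
      have h1 : ∀ j : Fin ν, (X : Polynomial K) ^ ord ∣ Matrix.vecMul p (F * M) j := by
        intro j
        rw [hFM]
        by_cases h2 : (j : ℕ) < r
        · have he : Matrix.vecMul p (Matrix.of (fun i (j : Fin ν) =>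
              if h2 : (j : ℕ) < r then (F * C) i ⟨(j : ℕ), h2⟩ else 0)) j
              = Matrix.vecMul p (F * C) ⟨(j : ℕ), h2⟩ := by
            simp [Matrix.vecMul, dotProduct, h2]
          rw [he]; exact hp _
        · have he : Matrix.vecMul p (Matrix.of (fun i (j : Fin ν) =>
              if h2 : (j : ℕ) < r then (F * C) i ⟨(j : ℕ), h2⟩ else 0)) j = 0 := by
            simp [Matrix.vecMul, dotProduct, h2]
          rw [he]; exact dvd_zero _
      have h2 : ∀ j : Fin ν, (X : Polynomial K) ^ ord ∣
          Matrix.vecMul p (F * M * M.adjugate) j := by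
        intro j
        rw [← Matrix.vecMul_vecMul]
        simp only [Matrix.vecMul, dotProduct]
        exact Finset.dvd_sum fun k _ => (h1 k).mul_right _
      have hFMadj : F * M * M.adjugate = M.det • F := by
        rw [Matrix.mul_assoc, Matrix.mul_adjugate, Matrix.mul_smul, Matrix.mul_one]
      intro j
      have h3 := h2 j
      rw [hFMadj] at h3
      have he : Matrix.vecMul p (M.det • F) j = M.det * Matrix.vecMul p F j := by
        simp only [Matrix.vecMul, dotProduct, Matrix.smul_apply, smul_eq_mul]
        rw [Finset.mul_sum]
        exact Finset.sum_congr rfl fun i _ => by ring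
      have h4 : (X : Polynomial K) ^ ord ∣ M.det * Matrix.vecMul p F j := he ▸ h3
      exact (Polynomial.prime_X).pow_dvd_of_dvd_mul_left ord hXdvd h4
end

section
/- Let K be a field, F ∈ K[x]^{μ×ν} of rank ρ with μ ≤ ν, and r with ρ ≤ r ≤ μ. Let R ⊆ K be a finite subset of cardinality κ and let C ∈ K^{ν×r} have entries chosen independently and uniformly at random from R. Then with probability at least 1 − r/κ there exists K' ∈ K[x]^{ν×(ν−r)} such that F·K' = 0 and the matrix [C K'(0)] ∈ K^{ν×ν} is invertible. -/
set_option synthInstance.maxHeartbeats 1000000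
set_option maxHeartbeats 1000000

open Polynomial

section AuxSZ
open MvPolynomial Finset
open scoped Classical

theorem my_sz {K : Type} [Field K] :
    ∀ (n : ℕ) (d : ℕ) (p : MvPolynomial (Fin n) K), p ≠ 0 → p.totalDegree ≤ d →
    ∀ (R : Finset K),
    (Finset.univ.filter fun f : Fin n → R =>
      MvPolynomial.eval (fun i => (f i : K)) p = 0).card * R.card ≤ d * R.card ^ n := by
  intro n
  induction n with
  | zero =>
    intro d p hp hd R
    have : (Finset.univ.filter fun f : Fin 0 → R =>
        MvPolynomial.eval (fun i => (f i : K)) p = 0) = ∅ := by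
      apply Finset.filter_false_of_mem
      intro f _
      have : p = MvPolynomial.C (p.coeff 0) := (MvPolynomial.eq_C_of_isEmpty p)
      rw [this, MvPolynomial.eval_C]
      intro h
      apply hp
      rw [this, h, map_zero]
    rw [this]
    simp
  | succ n ih =>
    intro d p hp hd R
    set q := finSuccEquiv K n p with hq
    have hq0 : q ≠ 0 := by
      simp only [hq, ne_eq, AddEquivClass.map_eq_zero_iff]
      exact hp
    set k := q.natDegree with hk
    have hkd : k ≤ d := by
      rw [hk, natDegree_finSuccEquiv]
      exact le_trans (degreeOf_le_totalDegree p 0) hd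
    set c := q.leadingCoeff with hc
    have hc0 : c ≠ 0 := Polynomial.leadingCoeff_ne_zero.mpr hq0
    have hcoeff : c = q.coeff k := by rw [hc, Polynomial.leadingCoeff]
    have hcd : c.totalDegree ≤ d - k := by
      have h2 := totalDegree_coeff_finSuccEquiv_add_le p k (by rw [← hcoeff]; exact hc0)
      rw [← hq, ← hcoeff] at h2
      omega
    -- the set we bound
    set A := (Finset.univ.filter fun f : Fin (n+1) → R =>
      MvPolynomial.eval (fun i => (f i : K)) p = 0) with hA
    -- fiberwise counting
    have hfib : A.card = ∑ g : Fin n → R,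
        (A.filter fun f => f ∘ Fin.succ = g).card := by
      apply Finset.card_eq_sum_card_fiberwise
      intro f _
      exact Finset.mem_univ _
    -- each fiber injects into the single-variable root count
    have hfle : ∀ g : Fin n → R, (A.filter fun f => f ∘ Fin.succ = g).card ≤
        (Finset.univ.filter fun a : R =>
          Polynomial.eval (a : K) (q.map (MvPolynomial.eval fun i => ((g i : K)))) = 0).card := by
      intro g
      apply Finset.card_le_card_of_injOn (fun f => f 0)
      · intro f hf
        simp only [Finset.mem_coe, Finset.mem_filter, Finset.mem_univ, true_and, hA] at hf ⊢
        obtain ⟨h1, h2⟩ := hf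
        rw [← eval_eq_eval_mv_eval']
        have hfc : (fun i => (f i : K)) = Fin.cons ((f 0 : K)) (fun i => ((g i : K))) := by
          funext i
          refine Fin.cases rfl (fun j => ?_) i
          have := congrFun h2 j
          simp only [Function.comp] at this
          simp [Fin.cons_succ, ← this]
        rw [← hfc]
        exact h1
      · intro f1 h1 f2 h2 he
        simp only [Finset.mem_coe, Finset.mem_filter, hA] at h1 h2
        funext i
        refine Fin.cases ?_ ?_ i
        · exact he
        · intro j
          have := congrFun h1.2 j
          have h2' := congrFun h2.2 j
          simp only [Function.comp] at this h2'
          rw [this, h2']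
    -- notation for single-variable count
    set cnt : (Fin n → R) → ℕ := fun g =>
      (Finset.univ.filter fun a : R =>
        Polynomial.eval (a : K) (q.map (MvPolynomial.eval fun i => ((g i : K)))) = 0).card with hcnt
    have hRcard : (Finset.univ : Finset R).card = R.card := by
      rw [Finset.card_univ, Fintype.card_coe]
    have hGcard : (Finset.univ : Finset (Fin n → R)).card = R.card ^ n := by
      rw [Finset.card_univ, Fintype.card_fun, Fintype.card_coe, Fintype.card_fin]
    -- good tails have few roots
    have hgood : ∀ g : Fin n → R, MvPolynomial.eval (fun i => ((g i : K))) c ≠ 0 → cnt g ≤ k := by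
      intro g hg
      set qg := q.map (MvPolynomial.eval fun i => ((g i : K))) with hqg
      have hqg0 : qg ≠ 0 := fun h => hg (by
        have := Polynomial.coeff_map (MvPolynomial.eval fun i => ((g i : K))) k (p := q)
        rw [← hqg, h, Polynomial.coeff_zero, ← hcoeff] at this
        exact this.symm)
      simp only [hcnt]
      calc (Finset.univ.filter fun a : R =>
        Polynomial.eval (a : K) (q.map (MvPolynomial.eval fun i => ((g i : K)))) = 0).card
          ≤ qg.roots.toFinset.card := by
              refine Finset.card_le_card_of_injOn (fun a => (a : K)) ?_ ?_
              · intro a ha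
                simp only [Finset.mem_coe, Finset.mem_filter] at ha
                rw [Finset.mem_coe, Multiset.mem_toFinset, Polynomial.mem_roots hqg0]
                exact ha.2
              · exact fun a _ b _ h => Subtype.coe_injective h
        _ ≤ Multiset.card qg.roots := Multiset.toFinset_card_le _
        _ ≤ qg.natDegree := Polynomial.card_roots' qg
        _ ≤ k := Polynomial.natDegree_map_le
    set bad := (Finset.univ.filter fun g : Fin n → R =>
        MvPolynomial.eval (fun i => ((g i : K))) c = 0) with hbad
    have hbadIH : bad.card * R.card ≤ (d - k) * R.card ^ n := ih (d - k) c hc0 hcd R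
    have hAle : A.card ≤ bad.card * R.card + R.card ^ n * k := by
      rw [hfib]
      calc ∑ g : Fin n → R, (A.filter fun f => f ∘ Fin.succ = g).card
          ≤ ∑ g : Fin n → R, cnt g := Finset.sum_le_sum fun g _ => hfle g
        _ = (∑ g ∈ bad, cnt g) +
            ∑ g ∈ Finset.univ.filter (fun g : Fin n → R =>
              ¬ MvPolynomial.eval (fun i => ((g i : K))) c = 0), cnt g :=
            (Finset.sum_filter_add_sum_filter_not _ _ _).symm
        _ ≤ bad.card * R.card + R.card ^ n * k := by
            apply Nat.add_le_add
            · calc ∑ g ∈ bad, cnt g ≤ ∑ _g ∈ bad, R.card :=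
                    Finset.sum_le_sum fun g _ => by
                      rw [← hRcard]; exact Finset.card_filter_le _ _
                _ = bad.card * R.card := by rw [Finset.sum_const, smul_eq_mul]
            · calc ∑ g ∈ Finset.univ.filter (fun g : Fin n → R =>
                    ¬ MvPolynomial.eval (fun i => ((g i : K))) c = 0), cnt g
                  ≤ ∑ _g ∈ Finset.univ.filter (fun g : Fin n → R =>
                    ¬ MvPolynomial.eval (fun i => ((g i : K))) c = 0), k :=
                    Finset.sum_le_sum fun g hg => hgood g (by
                      simp only [Finset.mem_filter] at hg; exact hg.2)
                _ = (Finset.univ.filter (fun g : Fin n → R =>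
                    ¬ MvPolynomial.eval (fun i => ((g i : K))) c = 0)).card * k := by
                    rw [Finset.sum_const, smul_eq_mul]
                _ ≤ R.card ^ n * k := by
                    apply Nat.mul_le_mul_right
                    rw [← hGcard]
                    exact Finset.card_filter_le _ _
    calc A.card * R.card ≤ (bad.card * R.card + R.card ^ n * k) * R.card :=
          Nat.mul_le_mul_right _ hAle
      _ = (bad.card * R.card) * R.card + k * R.card ^ (n+1) := by ring
      _ ≤ (d - k) * R.card ^ n * R.card + k * R.card ^ (n+1) := by
          apply Nat.add_le_add_right
          exact Nat.mul_le_mul_right _ hbadIH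
      _ = ((d - k) + k) * R.card ^ (n+1) := by ring
      _ = d * R.card ^ (n+1) := by rw [Nat.sub_add_cancel hkd]

end AuxSZ

theorem my_ker {K : Type} [Field K] (μ ν r ρ : ℕ)
    (F : Matrix (Fin μ) (Fin ν) (Polynomial K))
    (hρ : F.rank = ρ) (hρr : ρ ≤ r) (hrμ : r ≤ μ) (hμν : μ ≤ ν) :
    ∃ K' : Matrix (Fin ν) (Fin (ν - r)) (Polynomial K),
      F * K' = 0 ∧
      LinearIndependent K (fun j : Fin (ν - r) => fun i : Fin ν => (K' i j).eval 0) := by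
  classical
  let L := FractionRing (Polynomial K)
  -- componentwise inclusion into the fraction field
  let ψ : ∀ (κ' : ℕ), (Fin κ' → Polynomial K) →ₗ[Polynomial K] (Fin κ' → L) := fun κ' =>
    LinearMap.pi (fun i => (Algebra.linearMap (Polynomial K) L).comp (LinearMap.proj i))
  have hψ : ∀ (κ' : ℕ) (w : Fin κ' → Polynomial K) (i : Fin κ'),
      ψ κ' w i = algebraMap (Polynomial K) L (w i) := fun _ _ _ => rfl
  have hinj : Function.Injective (algebraMap (Polynomial K) L) := IsFractionRing.injective (Polynomial K) L
  set N := LinearMap.ker (Matrix.mulVecLin F) with hN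
  obtain ⟨m, bN⟩ := Submodule.basisOfPid (Pi.basisFun (Polynomial K) (Fin ν)) N
  -- the span of the images of bN in L^ν
  set SL : Submodule L (Fin ν → L) :=
    Submodule.span L (Set.range (fun i : Fin m => ψ ν (bN i))) with hSL
  set F' := F.map (algebraMap (Polynomial K) L) with hF'
  -- images of elements of a submodule with basis lie in the L-span of the basis images
  have himg : ∀ (κ' : ℕ) (M' : Submodule (Polynomial K) (Fin κ' → Polynomial K)) (t : ℕ)
      (b : Module.Basis (Fin t) (Polynomial K) M') (x : Fin κ' → Polynomial K), x ∈ M' →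
      ψ κ' x ∈ Submodule.span L (Set.range fun i => ψ κ' (b i)) := by
    intro κ' M' t b x hx
    have hxsum : x = ∑ i, (b.repr ⟨x, hx⟩ i) • (b i : Fin κ' → Polynomial K) := by
      have h1 := b.sum_repr ⟨x, hx⟩
      have h2 := congrArg (Submodule.subtype M') h1
      simp only [map_sum, Submodule.coe_subtype, SetLike.val_smul, map_smul] at h2
      exact h2.symm
    rw [hxsum, map_sum]
    apply Submodule.sum_mem
    intro i _
    rw [LinearMap.map_smul, ← algebraMap_smul L (b.repr ⟨x, hx⟩ i) (ψ κ' (b i))]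
    exact Submodule.smul_mem _ _ (Submodule.subset_span ⟨i, rfl⟩)
  -- Step A3 : rank of F' at most ρ
  have hrk : F'.rank ≤ ρ := by
    obtain ⟨s, bR⟩ := Submodule.basisOfPid (Pi.basisFun (Polynomial K) (Fin μ))
      (LinearMap.range F.mulVecLin)
    have hs : s = ρ := by
      have h1 := Module.finrank_eq_card_basis bR
      rw [Fintype.card_fin] at h1
      rw [← hρ]
      exact h1.symm
    have key : LinearMap.range F'.mulVecLin ≤
        Submodule.span L (Set.range (fun i : Fin s => ψ μ (bR i))) := by
      rw [Matrix.range_mulVecLin, Submodule.span_le]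
      rintro _ ⟨j, rfl⟩
      have hcol : F'.col j = ψ μ (F.col j) := rfl
      rw [hcol]
      apply himg
      rw [Matrix.range_mulVecLin]
      exact Submodule.subset_span ⟨j, rfl⟩
    have h2 : F'.rank ≤ Module.finrank L
        (Submodule.span L (Set.range (fun i : Fin s => ψ μ (bR i)))) :=
      Submodule.finrank_mono key
    apply le_trans h2
    rw [← hs]
    apply le_trans (finrank_span_le_card _)
    rw [Set.toFinset_range]
    apply le_trans (Finset.card_image_le)
    simp
  -- Step A5 : kernel over L inside SL
  have hcomm : ∀ u : Fin ν → Polynomial K, ψ μ (F.mulVecLin u) = F'.mulVecLin (ψ ν u) := by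
    intro u
    funext i
    rw [hψ]
    simp only [Matrix.mulVecLin_apply, Matrix.mulVec, dotProduct, map_sum, map_mul, hF',
      Matrix.map_apply, hψ]
  have hker : LinearMap.ker (Matrix.mulVecLin F') ≤ SL := by
    intro v hv
    rw [LinearMap.mem_ker] at hv
    obtain ⟨b, hb⟩ := IsLocalization.exist_integer_multiples_of_finite
      (nonZeroDivisors (Polynomial K)) v
    choose w hw using hb
    have hbv : ψ ν w = (algebraMap (Polynomial K) L (b : Polynomial K)) • v := by
      funext i
      rw [hψ, hw i, Algebra.smul_def]
      rfl
    have hw0 : F.mulVecLin w = 0 := by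
      have h6 : ψ μ (F.mulVecLin w) = 0 := by
        rw [hcomm, hbv, LinearMap.map_smul, hv, smul_zero]
      funext i
      apply hinj
      rw [← hψ μ (F.mulVecLin w) i, h6]
      simp
    have hmem : ψ ν w ∈ SL := himg ν N m bN w hw0
    have hb0 : algebraMap (Polynomial K) L (b : Polynomial K) ≠ 0 := by
      intro h
      have hbne : (b : Polynomial K) ≠ 0 := nonZeroDivisors.coe_ne_zero b
      exact hbne (hinj (by rw [h, map_zero]))
    have hvrw : v = (algebraMap (Polynomial K) L (b : Polynomial K))⁻¹ • (ψ ν w) := by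
      rw [hbv, smul_smul, inv_mul_cancel₀ hb0, one_smul]
    rw [hvrw]
    exact Submodule.smul_mem _ _ hmem
  -- Step A6
  have hm : ν - r ≤ m := by
    have h1 : Module.finrank L (LinearMap.ker (Matrix.mulVecLin F')) = ν - F'.rank := by
      have := LinearMap.finrank_range_add_finrank_ker (Matrix.mulVecLin F')
      have h2 : Module.finrank L (Fin ν → L) = ν := by simp
      rw [h2] at this
      have : F'.rank + Module.finrank L (LinearMap.ker (Matrix.mulVecLin F')) = ν := this
      omega
    have h3 : Module.finrank L SL ≤ m := by
      apply le_trans (finrank_span_le_card _)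
      rw [Set.toFinset_range]
      apply le_trans (Finset.card_image_le)
      simp
    have h4 : Module.finrank L (LinearMap.ker (Matrix.mulVecLin F')) ≤ Module.finrank L SL :=
      Submodule.finrank_mono hker
    omega
  -- Step B : constant coefficients of bN are linearly independent over K
  set vconst : Fin m → (Fin ν → K) := fun i => fun j => ((bN i : Fin ν → Polynomial K) j).coeff 0
    with hvconst
  have hli : LinearIndependent K vconst := by
    rw [Fintype.linearIndependent_iff]
    intro cf hcf i0
    set wN : N := ∑ i, (C (cf i)) • bN i with hwN
    have hwcoe : (wN : Fin ν → Polynomial K) =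
        ∑ i, (C (cf i)) • (bN i : Fin ν → Polynomial K) := by
      rw [hwN]
      push_cast [Submodule.coe_sum]
      rfl
    have hcoeff0 : ∀ j, ((wN : Fin ν → Polynomial K) j).coeff 0 = 0 := by
      intro j
      have h1 := congrFun hcf j
      simp only [Finset.sum_apply, Pi.smul_apply, smul_eq_mul, Pi.zero_apply, hvconst] at h1
      rw [hwcoe]
      simp only [Finset.sum_apply, Pi.smul_apply, smul_eq_mul]
      rw [Polynomial.finset_sum_coeff]
      simpa [Polynomial.coeff_C_mul] using h1
    set u : Fin ν → Polynomial K := fun j => ((wN : Fin ν → Polynomial K) j).divX with hu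
    have hXuw : (X : Polynomial K) • u = (wN : Fin ν → Polynomial K) := by
      funext j
      have h2 := Polynomial.divX_mul_X_add ((wN : Fin ν → Polynomial K) j)
      rw [hcoeff0 j] at h2
      simp only [map_zero, add_zero] at h2
      simp only [Pi.smul_apply, smul_eq_mul, hu]
      rw [mul_comm]
      exact h2
    have hu0 : F.mulVecLin u = 0 := by
      have h2 : (X : Polynomial K) • F.mulVecLin u = 0 := by
        rw [← LinearMap.map_smul, hXuw]
        exact wN.2
      funext i
      have h3 := congrFun h2 i
      simp only [Pi.smul_apply, smul_eq_mul, Pi.zero_apply] at h3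
      exact (mul_eq_zero.mp h3).resolve_left Polynomial.X_ne_zero
    have h4 : wN = (X : Polynomial K) • (⟨u, hu0⟩ : N) := by
      apply Subtype.ext
      rw [Submodule.coe_smul]
      exact hXuw.symm
    have h5 := congrArg (fun z => bN.repr z i0) h4
    simp only [hwN, map_sum, map_smul, Module.Basis.repr_self, Finsupp.smul_apply, Finsupp.smul_single,
      Finsupp.single_apply, Finset.sum_apply'] at h5
    rw [Finset.sum_ite_eq' Finset.univ i0] at h5
    simp only [Finset.mem_univ, if_true, smul_eq_mul, mul_one] at h5
    have h6 := congrArg (fun p => Polynomial.coeff p 0) h5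
    simp only [Polynomial.mul_coeff_zero, Polynomial.coeff_X_zero, zero_mul,
      Polynomial.coeff_C_zero] at h6
    exact h6
  -- Step C : assemble
  refine ⟨Matrix.of (fun i j => (bN (Fin.castLE hm j) : Fin ν → Polynomial K) i), ?_, ?_⟩
  · apply Matrix.ext
    intro i j
    have hmem : F.mulVecLin (fun k => (bN (Fin.castLE hm j) : Fin ν → Polynomial K) k) = 0 :=
      (bN (Fin.castLE hm j)).2
    have h5 := congrFun hmem i
    rw [Matrix.mul_apply]
    simp only [Matrix.mulVecLin_apply, Matrix.mulVec, dotProduct, Pi.zero_apply] at h5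
    simpa using h5
  · have : (fun j : Fin (ν - r) => fun i : Fin ν =>
        ((Matrix.of (fun i j => (bN (Fin.castLE hm j) : Fin ν → Polynomial K) i) : Matrix _ _ (Polynomial K)) i j).eval 0)
        = vconst ∘ (Fin.castLE hm) := by
      funext j i
      simp [hvconst, Polynomial.coeff_zero_eq_eval_zero]
    rw [this]
    exact hli.comp _ (Fin.castLE_injective hm)


theorem my_ext {K : Type} [Field K] (ν r : ℕ) (hr : r ≤ ν)
    (w : Fin (ν - r) → (Fin ν → K)) (hw : LinearIndependent K w) :
    ∃ c : Fin ν → Fin r → K,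
      (Matrix.of fun i j : Fin ν => if h2 : (j : ℕ) < r then c i ⟨(j : ℕ), h2⟩
        else w ⟨(j : ℕ) - r, by have := j.isLt; omega⟩ i).det ≠ 0 := by
  classical
  set W := Submodule.span K (Set.range w) with hW
  obtain ⟨W', hcompl⟩ := Submodule.exists_isCompl W
  have hfW : Module.finrank K W = ν - r := by
    rw [hW, finrank_span_eq_card hw, Fintype.card_fin]
  have hfW' : Module.finrank K W' = r := by
    have h1 := Submodule.finrank_add_eq_of_isCompl hcompl
    have h2 : Module.finrank K (Fin ν → K) = ν := by simp
    rw [hfW, h2] at h1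
    omega
  set bW' := (Module.finBasis K W').reindex (finCongr hfW') with hbW'
  set g : Fin r → (Fin ν → K) := fun j => (bW' j : Fin ν → K) with hg
  have hgli : LinearIndependent K g :=
    (bW'.linearIndependent).map' W'.subtype (Submodule.ker_subtype W')
  have hgspan : Submodule.span K (Set.range g) ≤ W' := by
    rw [Submodule.span_le]
    rintro _ ⟨j, rfl⟩
    exact (bW' j).2
  have hwspan : Submodule.span K (Set.range w) ≤ W := le_of_eq rfl
  have ht : LinearIndependent K (Sum.elim g w) := by
    apply hgli.sum_type hw
    exact Disjoint.mono hgspan hwspan hcompl.disjoint.symm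
  set π : Fin ν → (Fin r ⊕ Fin (ν - r)) := fun j =>
    if h : (j : ℕ) < r then Sum.inl ⟨(j : ℕ), h⟩
    else Sum.inr ⟨(j : ℕ) - r, by have := j.isLt; omega⟩ with hπ
  have hπinj : Function.Injective π := by
    intro a b hab
    simp only [hπ] at hab
    split_ifs at hab with h1 h2 h2 <;>
      simp only [Sum.inl.injEq, Sum.inr.injEq, Fin.mk.injEq] at hab <;>
      (try apply Fin.ext) <;> omega
  have hu : LinearIndependent K ((Sum.elim g w) ∘ π) := ht.comp π hπinj
  refine ⟨fun i j => g j i, ?_⟩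
  have hcols : (Matrix.of fun i j : Fin ν => if h2 : (j : ℕ) < r then g ⟨(j : ℕ), h2⟩ i
      else w ⟨(j : ℕ) - r, by have := j.isLt; omega⟩ i)
      = Matrix.of (fun i j => ((Sum.elim g w) ∘ π) j i) := by
    funext i j
    simp only [Matrix.of_apply, Function.comp, hπ]
    split_ifs with h <;> rfl
  rw [hcols]
  intro hdet
  have hunit : IsUnit (Matrix.of (fun i j : Fin ν => ((Sum.elim g w) ∘ π) j i)) := by
    rw [← Matrix.linearIndependent_cols_iff_isUnit]
    convert hu using 1
    funext j i
    rfl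
  rw [Matrix.isUnit_iff_isUnit_det, hdet] at hunit
  exact (not_isUnit_zero : ¬ IsUnit (0 : K)) hunit


/-- Probability of successful compression: if `C ∈ K^{ν×r}` has entries chosen
independently and uniformly at random from a finite subset `R ⊆ K` of cardinality `κ`
(here: counting the successful choices among the `κ^{ν·r}` possible ones), then with
probability at least `1 - r/κ` there is `K' ∈ K[x]^{ν×(ν-r)}` with `F·K' = 0` and
`[C K'(0)]` invertible. -/
theorem stmt10 (K : Type) [Field K] (μ ν r ρ κ : ℕ)
    (F : Matrix (Fin μ) (Fin ν) (Polynomial K)) (hμν : μ ≤ ν)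
    (hρ : F.rank = ρ) (hρr : ρ ≤ r) (hrμ : r ≤ μ)
    (R : Finset K) (hκ : R.card = κ) (hκ0 : 0 < κ) :
    ((1 : ℝ) - (r : ℝ) / (κ : ℝ)) * (κ : ℝ) ^ (ν * r) ≤
      (Nat.card {f : Fin ν × Fin r → R //
        ∃ K' : Matrix (Fin ν) (Fin (ν - r)) (Polynomial K),
          F * K' = 0 ∧
          IsUnit (Matrix.det (Matrix.of fun i j : Fin ν =>
            if h2 : (j : ℕ) < r then ((f (i, ⟨(j : ℕ), h2⟩) : K))
            else ((K' i ⟨(j : ℕ) - r, by have := j.isLt; omega⟩).eval 0)))} : ℝ) := by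
  classical
  obtain ⟨K', hFK', hliB⟩ := my_ker μ ν r ρ F hρ hρr hrμ hμν
  obtain ⟨c0, hc0⟩ := my_ext ν r (le_trans hrμ hμν) (fun j i => (K' i j).eval 0) hliB
  -- the multivariate determinant polynomial
  set M : Matrix (Fin ν) (Fin ν) (MvPolynomial (Fin ν × Fin r) K) :=
    Matrix.of (fun i j : Fin ν => if h2 : (j : ℕ) < r then (MvPolynomial.X (i, ⟨(j : ℕ), h2⟩))
      else MvPolynomial.C ((K' i ⟨(j : ℕ) - r, by have := j.isLt; omega⟩).eval 0)) with hM
  set P : MvPolynomial (Fin ν × Fin r) K := M.det with hP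
  -- for any assignment, evaluation of P is the determinant of the evaluated matrix
  have hevalP : ∀ φ : Fin ν × Fin r → K, MvPolynomial.eval φ P =
      (Matrix.of fun i j : Fin ν => if h2 : (j : ℕ) < r then (φ (i, ⟨(j : ℕ), h2⟩))
        else ((K' i ⟨(j : ℕ) - r, by have := j.isLt; omega⟩).eval 0)).det := by
    intro φ
    rw [hP, RingHom.map_det]
    congr 1
    funext i j
    rw [hM]
    simp only [RingHom.mapMatrix_apply, Matrix.map_apply, Matrix.of_apply]
    split_ifs with h <;> simp
  have hP0 : P ≠ 0 := by
    intro h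
    apply hc0
    have h1 := hevalP (fun q => c0 q.1 q.2)
    rw [h, map_zero] at h1
    exact h1.symm
  have hPdeg : P.totalDegree ≤ r := by
    rw [hP, Matrix.det_apply]
    apply le_trans (MvPolynomial.totalDegree_finset_sum _ _)
    apply Finset.sup_le
    intro σ _
    have hterm : (Equiv.Perm.sign σ • ∏ i, M (σ i) i).totalDegree ≤
        (∏ i, M (σ i) i).totalDegree := by
      rcases Int.units_eq_one_or (Equiv.Perm.sign σ) with h | h <;> rw [h] <;>
        simp [MvPolynomial.totalDegree_neg]
    apply le_trans hterm
    apply le_trans (MvPolynomial.totalDegree_finset_prod _ _)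
    have hent : ∀ i : Fin ν, (M (σ i) i).totalDegree ≤ if (i : ℕ) < r then 1 else 0 := by
      intro i
      rw [hM]
      simp only [Matrix.of_apply]
      split_ifs with h
      · simp [MvPolynomial.totalDegree_X]
      · simp [MvPolynomial.totalDegree_C]
    apply le_trans (Finset.sum_le_sum fun i _ => hent i)
    rw [Fin.sum_univ_eq_sum_range (fun t => if t < r then 1 else 0) ν]
    rw [Finset.sum_boole]
    have : (Finset.range ν).filter (· < r) = Finset.range r := by
      ext t
      simp only [Finset.mem_filter, Finset.mem_range]
      constructor
      · rintro ⟨_, h⟩; exact h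
      · intro h; exact ⟨lt_of_lt_of_le h (le_trans hrμ hμν), h⟩
    rw [this]
    simp
  -- transport to linearly indexed variables
  set e := finProdFinEquiv (m := ν) (n := r) with he
  set P' := MvPolynomial.rename e P with hP'
  have hP'0 : P' ≠ 0 := by
    intro h
    apply hP0
    have := MvPolynomial.rename_injective (R := K) e e.injective
    apply this
    rw [map_zero, ← hP']
    exact h
  have hP'deg : P'.totalDegree ≤ r := le_trans (MvPolynomial.totalDegree_rename_le _ _) hPdeg
  have hsz := my_sz (ν * r) r P' hP'0 hP'deg R
  set Zf := (Finset.univ.filter fun f : Fin (ν * r) → R =>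
    MvPolynomial.eval (fun i => ((f i : K))) P' = 0) with hZf
  set Gf := (Finset.univ.filter fun f : Fin (ν * r) → R =>
    ¬ MvPolynomial.eval (fun i => ((f i : K))) P' = 0) with hGf
  have hsum : Zf.card + Gf.card = κ ^ (ν * r) := by
    rw [hZf, hGf, Finset.card_filter_add_card_filter_not]
    rw [Finset.card_univ, Fintype.card_fun, Fintype.card_coe, Fintype.card_fin, hκ]
  have hcard : Gf.card ≤ Nat.card {f : Fin ν × Fin r → R //
      ∃ K' : Matrix (Fin ν) (Fin (ν - r)) (Polynomial K),
        F * K' = 0 ∧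
        IsUnit (Matrix.det (Matrix.of fun i j : Fin ν =>
          if h2 : (j : ℕ) < r then ((f (i, ⟨(j : ℕ), h2⟩) : K))
          else ((K' i ⟨(j : ℕ) - r, by have := j.isLt; omega⟩).eval 0)))} := by
    rw [Nat.card_eq_fintype_card, ← Fintype.card_coe Gf]
    apply Fintype.card_le_of_injective
      (fun x => ⟨fun q => x.1 (e q), K', hFK', by
        have hx2 : ¬ (MvPolynomial.eval fun i => ((x.1 i : K))) P' = 0 :=
          (Finset.mem_filter.mp x.2).2
        rw [hP', MvPolynomial.eval_rename] at hx2
        rw [isUnit_iff_ne_zero]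
        rw [← hevalP (fun q => ((x.1 (e q) : K)))]
        exact hx2⟩)
    intro x y h
    apply Subtype.ext
    funext i
    have := congrFun (congrArg Subtype.val h) (e.symm i)
    simpa using this
  -- real arithmetic
  have hκR : (0 : ℝ) < (κ : ℝ) := by exact_mod_cast hκ0
  rw [hκ] at hsz
  have hZR : (Zf.card : ℝ) * κ ≤ r * (κ : ℝ) ^ (ν * r) := by exact_mod_cast hsz
  have hGR : (Gf.card : ℝ) = (κ : ℝ) ^ (ν * r) - Zf.card := by
    have h8 : (Zf.card : ℝ) + Gf.card = (κ : ℝ) ^ (ν * r) := by exact_mod_cast hsum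
    linarith
  have hZle : (Zf.card : ℝ) ≤ r * (κ : ℝ) ^ (ν * r) / κ := by
    rw [le_div_iff₀ hκR]
    exact hZR
  have hstep : ((1 : ℝ) - (r : ℝ) / (κ : ℝ)) * (κ : ℝ) ^ (ν * r) ≤ (Gf.card : ℝ) := by
    rw [hGR]
    have : ((1 : ℝ) - (r : ℝ) / (κ : ℝ)) * (κ : ℝ) ^ (ν * r)
        = (κ : ℝ) ^ (ν * r) - r * (κ : ℝ) ^ (ν * r) / κ := by ring
    rw [this]
    linarith
  exact le_trans hstep (by exact_mod_cast hcard)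
end

section
/- Let I be an ideal of K[α,β] containing α^{d_t}, with reduced Gröbner basis G = {g_0, ..., g_t} for the lexicographic order with α < β, where g_i has leading term α^{d_i} β^{e_i}, with 0 = d_0 < d_1 < ... < d_t and e_0 > e_1 > ... > e_t = 0. Then for each 0 ≤ i ≤ t, α^{d_i} divides g_i; in particular g_i = α^{d_i} ĝ_i with ĝ_i monic of degree e_i in β. -/
set_option synthInstance.maxHeartbeats 1000000
set_option maxHeartbeats 1000000

open Polynomial

/- We represent `K[α, β]` as `Polynomial (Polynomial K)`: the outer variable is `β`
and the inner variable is `α`. For the lexicographic order with `α < β`, the leading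
term of a nonzero `f` is `c · α^a β^b` where `b = f.natDegree`,
`a = f.leadingCoeff.natDegree` and `c = f.leadingCoeff.leadingCoeff`. -/

/-- Lazard's structural theorem: let `I ⊆ K[α,β]` be an ideal containing `α^{d_t}`,
with reduced lex Gröbner basis `g_0, ..., g_t` whose leading terms are
`α^{d_i} β^{e_i}` with `0 = d_0 < ... < d_t` and `e_0 > ... > e_t = 0`
(the Gröbner property: the leading term of every nonzero `f ∈ I` is divisible by some
leading term `α^{d_i} β^{e_i}`; reducedness: leading coefficients are `1` and no term of
`g_i` is divisible by the leading term of `g_j` for `j ≠ i`).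
Then `α^{d_i}` divides `g_i`: one has `g_i = α^{d_i} ĝ_i` with `ĝ_i` monic in `β`
of degree `e_i`. -/
theorem stmt15 (K : Type) [Field K] (t : ℕ)
    (dd ee : Fin (t + 1) → ℕ) (g : Fin (t + 1) → Polynomial (Polynomial K))
    (I : Ideal (Polynomial (Polynomial K)))
    (hd0 : dd 0 = 0) (het : ee (Fin.last t) = 0)
    (hdmono : StrictMono dd) (heanti : StrictAnti ee)
    (hα : Polynomial.C ((X : Polynomial K) ^ (dd (Fin.last t))) ∈ I)
    (hgI : ∀ i, g i ∈ I) (hg0 : ∀ i, g i ≠ 0)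
    (hβdeg : ∀ i, (g i).natDegree = ee i)
    (hαdeg : ∀ i, ((g i).leadingCoeff).natDegree = dd i)
    (hmonic : ∀ i, ((g i).leadingCoeff).leadingCoeff = 1)
    (hGB : ∀ f ∈ I, f ≠ 0 →
      ∃ i, dd i ≤ (f.leadingCoeff).natDegree ∧ ee i ≤ f.natDegree)
    (hred : ∀ i j, i ≠ j → ∀ a b : ℕ, ((g i).coeff b).coeff a ≠ 0 →
      ¬(dd j ≤ a ∧ ee j ≤ b)) :
    ∀ i, ∃ g' : Polynomial (Polynomial K),
      g i = Polynomial.C ((X : Polynomial K) ^ (dd i)) * g' ∧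
      g'.Monic ∧ g'.natDegree = ee i := by
  classical
  -- Key lemma: if F ∈ I has β-degree ≤ B, and dd j is ≤ dd j'' for every j'' with
  -- ee j'' ≤ B, then X^(dd j) divides the coefficient of F at β^B.
  have lemJ : ∀ (B : ℕ) (j : Fin (t + 1)),
      (∀ j'' : Fin (t + 1), ee j'' ≤ B → dd j ≤ dd j'') →
      ∀ F ∈ I, F.natDegree ≤ B → (X : Polynomial K) ^ (dd j) ∣ F.coeff B := by
    intro B j hj F hF hdeg
    set dt := dd (Fin.last t) with hdtdef
    set c := F.coeff B with hc
    set p := EuclideanDomain.gcd c ((X : Polynomial K) ^ dt) with hp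
    have hpc : p ∣ c := EuclideanDomain.gcd_dvd_left _ _
    have hpdt : p ∣ (X : Polynomial K) ^ dt := EuclideanDomain.gcd_dvd_right _ _
    have hXdt0 : ((X : Polynomial K) ^ dt) ≠ 0 := pow_ne_zero _ X_ne_zero
    have hp0 : p ≠ 0 := fun h => hXdt0 (zero_dvd_iff.mp (h ▸ hpdt))
    obtain ⟨v, hv, hassoc⟩ := (dvd_prime_pow Polynomial.prime_X dt).mp hpdt
    have hXvp : (X : Polynomial K) ^ v ∣ p := hassoc.symm.dvd
    have hXv0 : ((X : Polynomial K) ^ v) ≠ 0 := pow_ne_zero _ X_ne_zero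
    have hdegp : p.natDegree = v := by
      have h1 : p.natDegree ≤ ((X : Polynomial K) ^ v).natDegree :=
        natDegree_le_of_dvd hassoc.dvd hXv0
      have h2 : ((X : Polynomial K) ^ v).natDegree ≤ p.natDegree :=
        natDegree_le_of_dvd hXvp hp0
      rw [natDegree_X_pow] at h1 h2
      omega
    set a := EuclideanDomain.gcdA c ((X : Polynomial K) ^ dt) with ha
    set b' := EuclideanDomain.gcdB c ((X : Polynomial K) ^ dt) with hb'
    set Fp := F * Polynomial.C a +
      Polynomial.C ((X : Polynomial K) ^ dt * b') * (X : Polynomial (Polynomial K)) ^ B with hFp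
    have hFpI : Fp ∈ I := by
      apply I.add_mem (I.mul_mem_right _ hF)
      rw [map_mul]
      exact I.mul_mem_right _ (I.mul_mem_right _ hα)
    have hFpB : Fp.coeff B = p := by
      rw [hFp, coeff_add, coeff_mul_C, coeff_C_mul, coeff_X_pow, if_pos rfl, mul_one,
        hp, EuclideanDomain.gcd_eq_gcd_ab, ← hc, ← ha, ← hb']
    have hFp0 : Fp ≠ 0 := by
      intro h
      rw [h, coeff_zero] at hFpB
      exact hp0 hFpB.symm
    have hFpdeg : Fp.natDegree = B := by
      have hle : Fp.natDegree ≤ B := by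
        apply le_trans (natDegree_add_le _ _)
        apply max_le
        · exact le_trans (natDegree_mul_le) (by simp [natDegree_C, hdeg])
        · refine le_trans (natDegree_mul_le) ?_
          rw [natDegree_C, natDegree_X_pow, Nat.zero_add]
      have hge : B ≤ Fp.natDegree := le_natDegree_of_ne_zero (by rw [hFpB]; exact hp0)
      omega
    have hlcFp : Fp.leadingCoeff = p := by rw [leadingCoeff, hFpdeg, hFpB]
    obtain ⟨j'', hj1, hj2⟩ := hGB Fp hFpI hFp0
    rw [hlcFp, hdegp] at hj1
    rw [hFpdeg] at hj2
    exact dvd_trans (dvd_trans (pow_dvd_pow _ (le_trans (hj j'' hj2) hj1)) hXvp) hpc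
  have hcoeff_nat : ∀ i : Fin (t + 1), (g i).coeff (ee i) = (g i).leadingCoeff := by
    intro i
    rw [leadingCoeff, hβdeg]
  -- the leading coefficient (in β) of g i is exactly X^(dd i)
  have hlcg : ∀ i : Fin (t + 1), (g i).leadingCoeff = (X : Polynomial K) ^ (dd i) := by
    intro i
    have hd := lemJ (ee i) i (fun j'' h => hdmono.monotone (heanti.le_iff_ge.mp h)) (g i)
      (hgI i) (hβdeg i).le
    rw [hcoeff_nat i] at hd
    obtain ⟨u, hu⟩ := hd
    have hlc0 : (g i).leadingCoeff ≠ 0 := leadingCoeff_ne_zero.mpr (hg0 i)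
    have hu0 : u ≠ 0 := by
      rintro rfl
      rw [mul_zero] at hu
      exact hlc0 hu
    have hdu : u.natDegree = 0 := by
      have h1 := hαdeg i
      rw [hu, natDegree_mul (pow_ne_zero _ X_ne_zero) hu0, natDegree_X_pow] at h1
      omega
    have hlu : u.coeff 0 = 1 := by
      have h2 := hmonic i
      rw [hu, leadingCoeff_mul, leadingCoeff_X_pow, one_mul, leadingCoeff, hdu] at h2
      exact h2
    have hu1 : u = 1 := by
      rw [Polynomial.eq_C_of_natDegree_eq_zero hdu, hlu, map_one]
    rw [hu, hu1, mul_one]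
  suffices main : ∀ n, ∀ i : Fin (t + 1), t - i.val = n →
      ∃ g' : Polynomial (Polynomial K),
        g i = Polynomial.C ((X : Polynomial K) ^ (dd i)) * g' ∧
        g'.Monic ∧ g'.natDegree = ee i by
    intro i
    exact main (t - i.val) i rfl
  intro n
  induction n using Nat.strong_induction_on with
  | _ n IH =>
  intro i hn
  have IHall : ∀ j : Fin (t + 1), i < j →
      ∃ g' : Polynomial (Polynomial K),
        g j = Polynomial.C ((X : Polynomial K) ^ (dd j)) * g' ∧
        g'.Monic ∧ g'.natDegree = ee j := by
    intro j hj
    have hji : i.val < j.val := hj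
    have hjt : j.val ≤ t := Nat.lt_succ_iff.mp j.isLt
    exact IH (t - j.val) (by omega) j rfl
  have hdvdall : ∀ b : ℕ, (X : Polynomial K) ^ (dd i) ∣ (g i).coeff b := by
    intro b
    rcases lt_trichotomy b (ee i) with hb | hb | hb
    · -- hard case: b < ee i
      have hit : i.val < t := by
        by_contra h
        have hil : i = Fin.last t := by
          have := Nat.lt_succ_iff.mp i.isLt
          ext
          simp [Fin.last]
          omega
        rw [hil, het] at hb
        omega
      set i' : Fin (t + 1) := ⟨i.val + 1, by omega⟩ with hi'def
      have hii' : i < i' := by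
        rw [Fin.lt_def]
        simp [hi'def]
      have hdd : dd i ≤ dd i' := hdmono.monotone (le_of_lt hii')
      set m := dd i' - dd i with hm
      have hmd : dd i' = m + dd i := by omega
      have hcoeffdvd : ∀ j : Fin (t + 1), i < j → ∀ k : ℕ,
          (X : Polynomial K) ^ (dd i') ∣ (g j).coeff k := by
        intro j hj k
        obtain ⟨hh, hgj, _, _⟩ := IHall j hj
        rw [hgj, coeff_C_mul]
        have hij : i' ≤ j := by
          rw [Fin.le_def]
          have : i.val < j.val := hj
          simp [hi'def]
          omega
        exact dvd_trans (pow_dvd_pow _ (hdmono.monotone hij)) (dvd_mul_right _ _)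
      -- inner downward induction: reduce the β-degree step by step
      have key : ∀ (n' B : ℕ) (F : Polynomial (Polynomial K)), B = b + n' → B < ee i →
          F ∈ I → F.natDegree ≤ B →
          (X : Polynomial K) ^ (dd i') ∣ (F.coeff b - (X : Polynomial K) ^ m * (g i).coeff b) →
          (X : Polynomial K) ^ (dd i') ∣ (X : Polynomial K) ^ m * (g i).coeff b := by
        intro n'
        induction n' with
        | zero =>
          intro B F hB hBe hFI hFd hinv
          have hBb : B = b := by omega
          subst hBb
          have h1 := lemJ B i' (fun j'' h'' => by
            apply hdmono.monotone
            have hlt : i < j'' := heanti.lt_iff_gt.mp (lt_of_le_of_lt h'' hBe)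
            rw [Fin.le_def]
            have : i.val < j''.val := hlt
            simp [hi'def]
            omega) F hFI hFd
          have h2 := dvd_sub h1 hinv
          rwa [sub_sub_cancel] at h2
        | succ n' IH2 =>
          intro B F hB hBe hFI hFd hinv
          set S := Finset.filter (fun j => ee j ≤ B) Finset.univ with hS
          have hSne : S.Nonempty := ⟨Fin.last t, by simp [hS, het]⟩
          set j' := S.min' hSne with hj'def
          have hj'B : ee j' ≤ B := by
            have := S.min'_mem hSne
            simp [hS] at this
            exact this
          have hj'min : ∀ j'' : Fin (t + 1), ee j'' ≤ B → dd j' ≤ dd j'' := fun j'' h =>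
            hdmono.monotone (S.min'_le j'' (by simp [hS, h]))
          have hij' : i < j' := heanti.lt_iff_gt.mp (lt_of_le_of_lt hj'B hBe)
          obtain ⟨w, hw⟩ := lemJ B j' hj'min F hFI hFd
          set s := B - ee j' with hs
          set Sub := Polynomial.C w * (g j' * (X : Polynomial (Polynomial K)) ^ s) with hSub
          have hSubI : Sub ∈ I := Ideal.mul_mem_left _ _ (Ideal.mul_mem_right _ _ (hgI j'))
          have hSubB : Sub.coeff B = F.coeff B := by
            rw [hSub, coeff_C_mul, coeff_mul_X_pow', if_pos (by omega : s ≤ B)]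
            have hBs : B - s = ee j' := by omega
            rw [hBs, hcoeff_nat j', hlcg j', hw]
            ring
          have hSubb : (X : Polynomial K) ^ (dd i') ∣ Sub.coeff b := by
            rw [hSub, coeff_C_mul, coeff_mul_X_pow']
            by_cases hsb : s ≤ b
            · rw [if_pos hsb]
              exact (hcoeffdvd j' hij' (b - s)).mul_left _
            · rw [if_neg hsb, mul_zero]
              exact dvd_zero _
          have hSubd : Sub.natDegree ≤ B := by
            apply le_trans (natDegree_mul_le)
            have : (g j' * (X : Polynomial (Polynomial K)) ^ s).natDegree ≤ ee j' + s := by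
              apply le_trans (natDegree_mul_le)
              simp [hβdeg, natDegree_X_pow]
            simp [natDegree_C]
            omega
          have hFd' : (F - Sub).natDegree ≤ b + n' := by
            rw [natDegree_le_iff_coeff_eq_zero]
            intro N hN
            rw [coeff_sub]
            by_cases hNB : N = B
            · rw [hNB, hSubB, sub_self]
            · have hNB' : B < N := by omega
              rw [coeff_eq_zero_of_natDegree_lt (lt_of_le_of_lt hFd hNB'),
                coeff_eq_zero_of_natDegree_lt (lt_of_le_of_lt hSubd hNB'), sub_self]
          apply IH2 (b + n') (F - Sub) rfl (by omega) (I.sub_mem hFI hSubI) hFd'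
          rw [coeff_sub]
          have heq : F.coeff b - Sub.coeff b - (X : Polynomial K) ^ m * (g i).coeff b
              = (F.coeff b - (X : Polynomial K) ^ m * (g i).coeff b) - Sub.coeff b := by ring
          rw [heq]
          exact dvd_sub hinv hSubb
      -- initialization
      set s0 := ee i - ee i' with hs0
      have hei' : ee i' < ee i := heanti hii'
      set F1 := Polynomial.C ((X : Polynomial K) ^ m) * g i -
        g i' * (X : Polynomial (Polynomial K)) ^ s0 with hF1
      have hF1I : F1 ∈ I := I.sub_mem (I.mul_mem_left _ (hgI i)) (I.mul_mem_right _ (hgI i'))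
      have hcoeffe : (g i' * (X : Polynomial (Polynomial K)) ^ s0).coeff (ee i)
          = (X : Polynomial K) ^ (dd i') := by
        rw [coeff_mul_X_pow', if_pos (by omega : s0 ≤ ee i)]
        have h1 : ee i - s0 = ee i' := by omega
        rw [h1, hcoeff_nat i', hlcg i']
      have hF1e : F1.coeff (ee i) = 0 := by
        rw [hF1, coeff_sub, coeff_C_mul, hcoeff_nat i, hlcg i, hcoeffe, ← pow_add,
          show m + dd i = dd i' from hmd.symm, sub_self]
      have hgi's0 : (g i' * (X : Polynomial (Polynomial K)) ^ s0).natDegree ≤ ee i := by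
        apply le_trans (natDegree_mul_le)
        simp [hβdeg, natDegree_X_pow]
        omega
      have hCgi : (Polynomial.C ((X : Polynomial K) ^ m) * g i).natDegree ≤ ee i := by
        apply le_trans (natDegree_mul_le)
        simp [natDegree_C, hβdeg]
      have hF1d : F1.natDegree ≤ ee i - 1 := by
        rw [natDegree_le_iff_coeff_eq_zero]
        intro N hN
        by_cases hNe : N = ee i
        · rw [hNe]
          exact hF1e
        · have hNe' : ee i < N := by omega
          rw [hF1, coeff_sub, coeff_eq_zero_of_natDegree_lt (lt_of_le_of_lt hCgi hNe'),
            coeff_eq_zero_of_natDegree_lt (lt_of_le_of_lt hgi's0 hNe'), sub_self]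
      have hF1b : (X : Polynomial K) ^ (dd i') ∣
          (F1.coeff b - (X : Polynomial K) ^ m * (g i).coeff b) := by
        rw [hF1, coeff_sub, coeff_C_mul]
        have heq : (X : Polynomial K) ^ m * (g i).coeff b
            - (g i' * (X : Polynomial (Polynomial K)) ^ s0).coeff b
            - (X : Polynomial K) ^ m * (g i).coeff b
            = -((g i' * (X : Polynomial (Polynomial K)) ^ s0).coeff b) := by ring
        rw [heq, dvd_neg, coeff_mul_X_pow']
        by_cases hsb : s0 ≤ b
        · rw [if_pos hsb]
          exact hcoeffdvd i' hii' (b - s0)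
        · rw [if_neg hsb]
          exact dvd_zero _
      have hkey := key (ee i - 1 - b) (ee i - 1) F1 (by omega) (by omega) hF1I hF1d hF1b
      rw [hmd, pow_add] at hkey
      exact (mul_dvd_mul_iff_left (pow_ne_zero m (X_ne_zero (R := K)))).mp hkey
    · rw [hb, hcoeff_nat i, hlcg i]
    · rw [coeff_eq_zero_of_natDegree_lt (by rw [hβdeg]; exact hb)]
      exact dvd_zero _
  obtain ⟨g', hg'⟩ := (Polynomial.C_dvd_iff_dvd_coeff _ _).mpr hdvdall
  have hXd0 : ((X : Polynomial K) ^ (dd i)) ≠ 0 := pow_ne_zero _ X_ne_zero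
  have hC0 : (Polynomial.C ((X : Polynomial K) ^ (dd i))) ≠ 0 := by
    simpa using hXd0
  have hg'0 : g' ≠ 0 := by
    rintro rfl
    rw [mul_zero] at hg'
    exact hg0 i hg'
  have hlc1 : g'.leadingCoeff = 1 := by
    have h1 : (g i).leadingCoeff = (X : Polynomial K) ^ (dd i) * g'.leadingCoeff := by
      rw [hg', leadingCoeff_mul, leadingCoeff_C]
    rw [hlcg i] at h1
    have h2 : (X : Polynomial K) ^ (dd i) * 1 = (X : Polynomial K) ^ (dd i) * g'.leadingCoeff := by
      rw [mul_one]
      exact h1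
    exact (mul_left_cancel₀ hXd0 h2).symm
  refine ⟨g', hg', hlc1, ?_⟩
  have h3 := hβdeg i
  rw [hg', natDegree_mul hC0 hg'0, natDegree_C] at h3
  omega
end

section
/- Let A = K[x]/(x^d) and let M ∈ A^{n×n} be a matrix whose reduction M₀ ∈ K^{n×n} modulo x is nonderogatory (its minimal polynomial over K has degree n). Then the ideal Ann(M) ⊆ A[y] of polynomials canceling the sequence (M^0, M^1, M^2, ...) is generated by a single monic polynomial P of degree n. -/
set_option synthInstance.maxHeartbeats 1000000
set_option maxHeartbeats 1000000

open Polynomial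

section Aux

variable (K : Type) [Field K] (d : ℕ) (hd : 0 < d)

/-- Reduction modulo `x` : evaluation at 0. -/
noncomputable def tpPhi : TP K d →+* K :=
  Ideal.Quotient.lift _ (evalRingHom 0) (by
    intro p hp
    rw [Ideal.mem_span_singleton] at hp
    obtain ⟨q, rfl⟩ := hp
    simp [zero_pow hd.ne'])

variable {K d}

lemma tpPhi_mk (p : Polynomial K) :
    tpPhi K d hd (Ideal.Quotient.mk _ p) = p.eval 0 := rfl

lemma tpPhi_algebraMap (c : K) :
    tpPhi K d hd (algebraMap K (TP K d) c) = c := by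
  have : algebraMap K (TP K d) c = Ideal.Quotient.mk _ (C c) := rfl
  rw [this, tpPhi_mk]; simp

/-- `xbar` : image of X in TP. -/
noncomputable abbrev tpX : TP K d :=
  Ideal.Quotient.mk (Ideal.span {(X : Polynomial K) ^ d}) X

lemma tpX_dvd_of_phi_eq_zero {a : TP K d} (ha : tpPhi K d hd a = 0) :
    (tpX : TP K d) ∣ a := by
  obtain ⟨p, rfl⟩ := Ideal.Quotient.mk_surjective a
  rw [tpPhi_mk] at ha
  have : (X : Polynomial K) ∣ p := by
    rw [X_dvd_iff, coeff_zero_eq_eval_zero]; exact ha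
  obtain ⟨q, rfl⟩ := this
  exact ⟨Ideal.Quotient.mk _ q, by rw [← map_mul]⟩

lemma tpPhi_of_tpX_dvd {a : TP K d} (ha : (tpX : TP K d) ∣ a) :
    tpPhi K d hd a = 0 := by
  obtain ⟨b, rfl⟩ := ha
  obtain ⟨q, rfl⟩ := Ideal.Quotient.mk_surjective b
  rw [← map_mul, tpPhi_mk]
  simp

lemma tpX_pow_d : (tpX : TP K d) ^ d = 0 := by
  rw [← map_pow, Ideal.Quotient.eq_zero_iff_mem]
  exact Ideal.subset_span rfl

lemma tpX_dvd_of_pow_mul_eq_zero {k : ℕ} (hk : k < d) {a : TP K d}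
    (ha : (tpX : TP K d) ^ k * a = 0) : (tpX : TP K d) ∣ a := by
  obtain ⟨p, rfl⟩ := Ideal.Quotient.mk_surjective a
  rw [← map_pow, ← map_mul, Ideal.Quotient.eq_zero_iff_mem,
    Ideal.mem_span_singleton] at ha
  have h1 : (X : Polynomial K) ^ k * X ^ (d - k) ∣ X ^ k * p := by
    rwa [← pow_add, add_tsub_cancel_of_le hk.le]
  have h2 : (X : Polynomial K) ^ (d - k) ∣ p :=
    (mul_dvd_mul_iff_left (pow_ne_zero k X_ne_zero)).mp h1
  have h3 : (X : Polynomial K) ∣ p :=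
    dvd_trans (dvd_pow_self X (Nat.sub_ne_zero_of_lt hk)) h2
  obtain ⟨q, rfl⟩ := h3
  exact ⟨Ideal.Quotient.mk _ q, by rw [← map_mul]⟩

end Aux

section Core

variable {K : Type} [Field K] {d n : ℕ}

/-- Core lemma: a polynomial of degree < n vanishing at M is zero. -/
lemma core (hd : 0 < d)
    (M : Matrix (Fin n) (Fin n) (TP K d)) (M₀ : Matrix (Fin n) (Fin n) K)
    (hM : M.map (tpPhi K d hd) = M₀)
    (hnd : (minpoly K M₀).natDegree = n)
    (R : Polynomial (TP K d)) (hdeg : R.natDegree < n)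
    (haR : Polynomial.aeval M R = 0) : R = 0 := by
  -- claim: for all k ≤ d, xbar^k divides every coefficient of R
  have key : ∀ k, k ≤ d → ∀ i, (tpX : TP K d) ^ k ∣ R.coeff i := by
    intro k hk
    induction k with
    | zero => intro i; simpa using dvd_refl _
    | succ k ih =>
      have hkd : k < d := hk
      have ih' := ih (le_of_lt hkd)
      choose c hc using ih'
      -- the sum
      have hsum : ∑ i ∈ Finset.range n, R.coeff i • M ^ i = 0 := by
        rw [← Polynomial.aeval_eq_sum_range' hdeg]; exact haR
      set S : Matrix (Fin n) (Fin n) (TP K d) :=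
        ∑ i ∈ Finset.range n, c i • M ^ i with hS
      have hxS : ∀ a b, (tpX : TP K d) ^ k * S a b = 0 := by
        intro a b
        have : (tpX : TP K d) ^ k • S = 0 := by
          rw [hS, Finset.smul_sum]
          rw [← hsum]
          refine Finset.sum_congr rfl fun i _ => ?_
          rw [hc i, smul_smul]
        have := congrFun (congrFun this a) b
        simpa [Matrix.smul_apply, smul_eq_mul] using this
      have hphiS : ∀ a b, tpPhi K d hd (S a b) = 0 := fun a b =>
        tpPhi_of_tpX_dvd hd (tpX_dvd_of_pow_mul_eq_zero hkd (hxS a b))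
      -- now reduce mod x
      have hMpow : ∀ i : ℕ, (M ^ i).map (tpPhi K d hd) = M₀ ^ i := by
        intro i
        have : (tpPhi K d hd).mapMatrix (M ^ i) = ((tpPhi K d hd).mapMatrix M) ^ i :=
          map_pow _ M i
        simpa [RingHom.mapMatrix_apply, hM] using this
      have hlin : ∑ i ∈ Finset.range n, tpPhi K d hd (c i) • M₀ ^ i = 0 := by
        ext a b
        have : tpPhi K d hd (S a b) = 0 := hphiS a b
        rw [hS] at this
        simp only [Matrix.sum_apply, Matrix.smul_apply, smul_eq_mul, map_sum, map_mul] at this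
        simpa [Matrix.sum_apply, Matrix.smul_apply, smul_eq_mul, ← hMpow,
          Matrix.map_apply] using this
      -- use linear independence of powers of M₀
      have hLI := linearIndependent_pow (K := K) M₀
      rw [hnd] at hLI
      have hlin' : ∑ i : Fin n, (fun i : Fin n => tpPhi K d hd (c i)) i • M₀ ^ (i : ℕ) = 0 := by
        rw [← hlin, ← Finset.sum_range fun i => tpPhi K d hd (c i) • M₀ ^ i]
      have hc0 : ∀ i : Fin n, tpPhi K d hd (c i) = 0 :=
        Fintype.linearIndependent_iff.mp hLI _ hlin'
      intro i
      by_cases hi : i < n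
      · have : (tpX : TP K d) ∣ c i := tpX_dvd_of_phi_eq_zero hd (hc0 ⟨i, hi⟩)
        obtain ⟨e, he⟩ := this
        exact ⟨e, by rw [hc i, he, pow_succ, mul_assoc]⟩
      · have : R.coeff i = 0 := coeff_eq_zero_of_natDegree_lt (lt_of_lt_of_le hdeg (not_lt.mp hi))
        rw [this]; exact dvd_zero _
  ext i
  have := key d le_rfl i
  rw [tpX_pow_d] at this
  simpa using zero_dvd_iff.mp this

end Core

/-- If the constant part `M₀` of `M ∈ A^{n×n}` (i.e. `M ≡ M₀ mod x`) is nonderogatory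
over `K` (its minimal polynomial has degree `n`), then the ideal of polynomials in
`A[y]` canceling the sequence of powers of `M` (equivalently, vanishing at `M`) is
generated by a single monic polynomial `P` of degree `n`. -/
theorem stmt17 (K : Type) [Field K] (d n : ℕ) (hd : 0 < d)
    (M : Matrix (Fin n) (Fin n) (TP K d)) (M₀ : Matrix (Fin n) (Fin n) K)
    (hM₀ : ∀ i j, M i j - algebraMap K (TP K d) (M₀ i j) ∈
      Ideal.span {Ideal.Quotient.mk (Ideal.span {(X : Polynomial K) ^ d}) X})
    (hnd : (minpoly K M₀).natDegree = n) :
    ∃ P : Polynomial (TP K d), P.Monic ∧ P.natDegree = n ∧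
      (Ideal.span {P} : Set (Polynomial (TP K d)))
        = {Q : Polynomial (TP K d) | Polynomial.aeval M Q = 0} := by
  haveI : Nontrivial (TP K d) := by
    refine Ideal.Quotient.nontrivial_iff.mpr (Ideal.span_singleton_ne_top ?_)
    intro h
    have := Polynomial.natDegree_eq_zero_of_isUnit h
    rw [natDegree_X_pow] at this
    omega
  have hM : M.map (tpPhi K d hd) = M₀ := by
    ext i j
    have h := hM₀ i j
    rw [Ideal.mem_span_singleton] at h
    have := tpPhi_of_tpX_dvd hd h
    rw [map_sub, tpPhi_algebraMap] at this
    have := sub_eq_zero.mp this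
    simpa [Matrix.map_apply] using this
  refine ⟨M.charpoly, M.charpoly_monic, ?_, ?_⟩
  · rw [Matrix.charpoly_natDegree_eq_dim, Fintype.card_fin]
  · ext Q
    simp only [SetLike.mem_coe, Ideal.mem_span_singleton, Set.mem_setOf_eq]
    constructor
    · intro hs
      obtain ⟨s, rfl⟩ := (Ideal.mem_span_singleton (α := (TP K d)[X]) (x := Q) (y := M.charpoly)).mp hs
      rw [map_mul, Matrix.aeval_self_charpoly, zero_mul]
    · intro hQ
      refine (Ideal.mem_span_singleton (α := (TP K d)[X]) (x := Q) (y := M.charpoly)).mpr ?_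
      rw [← Polynomial.modByMonic_eq_zero_iff_dvd M.charpoly_monic]
      have hdeg : (Q %ₘ M.charpoly).degree < M.charpoly.degree :=
        Polynomial.degree_modByMonic_lt Q M.charpoly_monic
      have haev : Polynomial.aeval M (Q %ₘ M.charpoly) = 0 := by
        rw [Polynomial.modByMonic_eq_sub_mul_div Q M.charpoly]
        rw [Polynomial.aeval_sub, map_mul, Matrix.aeval_self_charpoly, zero_mul, hQ, sub_zero]
      by_cases hR0 : Q %ₘ M.charpoly = 0
      · exact hR0
      refine core hd M M₀ hM hnd _ ?_ haev
      have hcd : M.charpoly.natDegree = n := by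
        rw [Matrix.charpoly_natDegree_eq_dim, Fintype.card_fin]
      have := Polynomial.natDegree_lt_natDegree hR0 hdeg
      omega
end

section
/- Let A = K[x]/(x^d) and let M ∈ A^{n×n} with M₀ = M mod x nonderogatory over K. If P and Q are both monic polynomials of degree n in A[y] with P(M) = 0 and Q(M) = 0, then P = Q. More generally, if Q ∈ A[y] has degree n, leading coefficient x^i, and Q(M) = 0, then Q = x^i P. -/
set_option synthInstance.maxHeartbeats 1000000
set_option maxHeartbeats 1000000

open Polynomial

/-- Let `M ∈ A^{n×n}` with constant part `M₀` nonderogatory over `K`. Then monic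
polynomials of degree `n` canceling `M` are unique; more generally, if `Q` has degree
`n`, leading coefficient `x^i`, and `Q(M) = 0`, then `Q = x^i · P` for the (unique)
monic `P` of degree `n` with `P(M) = 0`. -/
theorem stmt18 (K : Type) [Field K] (d n : ℕ) (hd : 0 < d)
    (M : Matrix (Fin n) (Fin n) (TP K d)) (M₀ : Matrix (Fin n) (Fin n) K)
    (hM₀ : ∀ i j, M i j - algebraMap K (TP K d) (M₀ i j) ∈
      Ideal.span {Ideal.Quotient.mk (Ideal.span {(X : Polynomial K) ^ d}) X})
    (hnd : (minpoly K M₀).natDegree = n) :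
    (∀ P Q : Polynomial (TP K d), P.Monic → P.natDegree = n →
      Q.Monic → Q.natDegree = n →
      Polynomial.aeval M P = 0 → Polynomial.aeval M Q = 0 → P = Q) ∧
    (∀ (P Q : Polynomial (TP K d)) (i : ℕ), P.Monic → P.natDegree = n →
      Polynomial.aeval M P = 0 → Q.natDegree = n →
      Q.leadingCoeff
        = (Ideal.Quotient.mk (Ideal.span {(X : Polynomial K) ^ d}) X) ^ i →
      Polynomial.aeval M Q = 0 →
      Q = Polynomial.C
        ((Ideal.Quotient.mk (Ideal.span {(X : Polynomial K) ^ d}) X) ^ i) * P) := by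
  set I : Ideal (Polynomial K) := Ideal.span {(X : Polynomial K) ^ d} with hI
  set t : TP K d := Ideal.Quotient.mk I X with ht
  -- the evaluation-at-0 map ε : TP K d → K
  obtain ⟨ε, hεmk⟩ : ∃ ε : TP K d →+* K,
      ∀ p : Polynomial K, ε (Ideal.Quotient.mk I p) = p.eval 0 := by
    refine ⟨Ideal.Quotient.lift I (Polynomial.evalRingHom 0) ?_, fun p => ?_⟩
    · intro p hp
      rw [hI, Ideal.mem_span_singleton] at hp
      obtain ⟨q, rfl⟩ := hp
      simp [zero_pow hd.ne']
    · rw [Ideal.Quotient.lift_mk]; rfl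
  have hεt : ε t = 0 := by rw [ht, hεmk]; simp
  have hεalg : ∀ c : K, ε (algebraMap K (TP K d) c) = c := by
    intro c
    have : algebraMap K (TP K d) c = Ideal.Quotient.mk I (C c) := rfl
    rw [this, hεmk]; simp
  have hdvd : ∀ a : TP K d, ε a = 0 → t ∣ a := by
    intro a ha
    obtain ⟨p, rfl⟩ := Ideal.Quotient.mk_surjective a
    rw [hεmk] at ha
    have hX : X ∣ p := Polynomial.X_dvd_iff.2 (by
      rwa [Polynomial.coeff_zero_eq_eval_zero])
    obtain ⟨q, rfl⟩ := hX
    exact ⟨Ideal.Quotient.mk I q, by rw [ht, ← map_mul]⟩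
  have htd : t ^ d = 0 := by
    rw [ht, ← map_pow, Ideal.Quotient.eq_zero_iff_mem, hI]
    exact Ideal.subset_span rfl
  have hann : ∀ j, j < d → ∀ a : TP K d, t ^ j * a = 0 → ε a = 0 := by
    intro j hj a h0
    obtain ⟨p, rfl⟩ := Ideal.Quotient.mk_surjective a
    rw [ht, ← map_pow, ← map_mul, Ideal.Quotient.eq_zero_iff_mem, hI,
      Ideal.mem_span_singleton] at h0
    have h1 : X ^ j * X ^ (d - j) ∣ X ^ j * p := by
      rwa [← pow_add, Nat.add_sub_cancel' hj.le]
    have h2 : (X : Polynomial K) ^ (d - j) ∣ p :=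
      (mul_dvd_mul_iff_left (pow_ne_zero j Polynomial.X_ne_zero)).1 h1
    have h3 : (X : Polynomial K) ∣ p :=
      dvd_trans (dvd_pow_self X (Nat.sub_ne_zero_of_lt hj)) h2
    rw [hεmk]
    rw [Polynomial.X_dvd_iff] at h3
    rwa [← Polynomial.coeff_zero_eq_eval_zero]
  -- ε kills span {t}
  have hkill : ∀ a ∈ Ideal.span {t}, ε a = 0 := by
    intro a ha
    rw [Ideal.mem_span_singleton] at ha
    obtain ⟨b, rfl⟩ := ha
    rw [map_mul, hεt, zero_mul]
  -- M reduces to M₀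
  have hMε : M.map ε = M₀ := by
    ext i j
    have := hkill _ (hM₀ i j)
    rw [map_sub, hεalg, sub_eq_zero] at this
    simpa [Matrix.map_apply] using this
  -- compatibility of ε.mapMatrix with algebra maps
  have hcomp : (ε.mapMatrix :
        Matrix (Fin n) (Fin n) (TP K d) →+* Matrix (Fin n) (Fin n) K).comp
        (algebraMap (TP K d) (Matrix (Fin n) (Fin n) (TP K d)))
      = (algebraMap K (Matrix (Fin n) (Fin n) K)).comp ε := by
    refine RingHom.ext fun a => ?_
    ext i j
    simp [RingHom.mapMatrix_apply, Matrix.map_apply, Matrix.algebraMap_matrix_apply,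
      apply_ite ε]
  -- pushing evaluation through ε
  have hmap : ∀ D : Polynomial (TP K d),
      (Polynomial.aeval M D : Matrix (Fin n) (Fin n) (TP K d)).map ε
        = Polynomial.aeval M₀ (D.map ε) := by
    intro D
    have h1 : (Polynomial.aeval M D : Matrix (Fin n) (Fin n) (TP K d)).map ε
        = ε.mapMatrix (Polynomial.aeval M D) := rfl
    rw [h1, Polynomial.aeval_def, Polynomial.hom_eval₂, hcomp,
      ← Polynomial.eval₂_map, RingHom.mapMatrix_apply, hMε, ← Polynomial.aeval_def]
  -- the minpoly argument
  have hint : IsIntegral K M₀ := IsIntegral.of_finite K M₀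
  have hsmall : ∀ q : Polynomial K, q.degree < (n : ℕ) →
      Polynomial.aeval M₀ q = 0 → q = 0 := by
    intro q hq h0
    by_contra hne
    have hdvd' := minpoly.dvd K M₀ h0
    have h1 : n ≤ q.natDegree := hnd ▸ Polynomial.natDegree_le_of_dvd hdvd' hne
    have h2 : q.natDegree < n := (Polynomial.natDegree_lt_iff_degree_lt hne).2 hq
    omega
  -- key lemma: low-degree polynomials annihilating M are zero
  have hkey : ∀ D : Polynomial (TP K d), D.degree < (n : ℕ) →
      Polynomial.aeval M D = 0 → D = 0 := by
    intro D hdeg h0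
    have main : ∀ j, j ≤ d → ∃ E : Polynomial (TP K d), E.degree < (n : ℕ) ∧
        D = C (t ^ j) * E ∧
        ∀ i k, t ^ j * (Polynomial.aeval M E : Matrix (Fin n) (Fin n) (TP K d)) i k
          = 0 := by
      intro j
      induction j with
      | zero =>
        intro _
        exact ⟨D, hdeg, by simp, fun i k => by simp [h0]⟩
      | succ j ih =>
        intro hj
        obtain ⟨E, hE, hDE, hEann⟩ := ih (Nat.le_of_succ_le hj)
        have hj' : j < d := hj
        have hεE : ∀ i k,
            ε ((Polynomial.aeval M E : Matrix (Fin n) (Fin n) (TP K d)) i k) = 0 :=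
          fun i k => hann j hj' _ (hEann i k)
        have hqm : Polynomial.aeval M₀ (E.map ε) = 0 := by
          rw [← hmap]
          ext i k
          simp [Matrix.map_apply, hεE]
        have hq0 : E.map ε = 0 :=
          hsmall _ (lt_of_le_of_lt Polynomial.degree_map_le hE) hqm
        have hcdvd : ∀ m, t ∣ E.coeff m := by
          intro m
          apply hdvd
          have := congrArg (fun q => Polynomial.coeff q m) hq0
          simpa [Polynomial.coeff_map] using this
        choose b hb using hcdvd
        set E' : Polynomial (TP K d) := ∑ m ∈ Finset.range n, C (b m) * X ^ m
          with hE'def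
        have hE'coeff : ∀ m, E'.coeff m = if m < n then b m else 0 := by
          intro m
          rw [hE'def, Polynomial.finset_sum_coeff]
          simp only [Polynomial.coeff_C_mul, Polynomial.coeff_X_pow, mul_ite,
            mul_one, mul_zero]
          simp [Finset.sum_ite_eq, Finset.mem_range]
        have hE'deg : E'.degree < (n : ℕ) := by
          rw [Polynomial.degree_lt_iff_coeff_zero]
          intro m hm
          rw [hE'coeff]
          have : ¬ m < n := by exact_mod_cast not_lt.2 hm
          simp [this]
        have hEzero : ∀ m, n ≤ m → E.coeff m = 0 := by
          intro m hm
          exact (Polynomial.degree_lt_iff_coeff_zero E n).1 hE m (by exact_mod_cast hm)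
        have hEeq : E = C t * E' := by
          ext m
          rw [Polynomial.coeff_C_mul, hE'coeff]
          by_cases hm : m < n
          · simp [hm, ← hb m]
          · simp [hm, hEzero m (not_lt.1 hm)]
        refine ⟨E', hE'deg, ?_, ?_⟩
        · rw [hDE, hEeq, ← mul_assoc, ← Polynomial.C_mul, ← pow_succ]
        · intro i k
          have h1 : (Polynomial.aeval M E : Matrix (Fin n) (Fin n) (TP K d)) i k
              = t * (Polynomial.aeval M E' : Matrix (Fin n) (Fin n) (TP K d)) i k := by
            rw [hEeq, map_mul, Polynomial.aeval_C, ← Algebra.smul_def]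
            simp [Matrix.smul_apply, smul_eq_mul]
          have h2 := hEann i k
          rw [h1] at h2
          calc t ^ (j + 1) *
                (Polynomial.aeval M E' : Matrix (Fin n) (Fin n) (TP K d)) i k
              = t ^ j * (t *
                (Polynomial.aeval M E' : Matrix (Fin n) (Fin n) (TP K d)) i k) := by
                ring
            _ = 0 := h2
    obtain ⟨E, _, hDE, _⟩ := main d le_rfl
    rw [hDE, htd, map_zero, zero_mul]
  -- part 2
  have part2 : ∀ (P Q : Polynomial (TP K d)) (i : ℕ), P.Monic → P.natDegree = n →
      Polynomial.aeval M P = 0 → Q.natDegree = n →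
      Q.leadingCoeff = t ^ i →
      Polynomial.aeval M Q = 0 →
      Q = Polynomial.C (t ^ i) * P := by
    intro P Q i hPm hPdeg hPa hQdeg hQlc hQa
    have h0 : Polynomial.aeval M (Q - C (t ^ i) * P) = 0 := by
      rw [Polynomial.aeval_sub, map_mul, hQa, hPa, mul_zero, sub_zero]
    have hdeg : (Q - C (t ^ i) * P).degree < (n : ℕ) := by
      rw [Polynomial.degree_lt_iff_coeff_zero]
      intro m hm
      rw [Polynomial.coeff_sub, Polynomial.coeff_C_mul]
      rcases eq_or_lt_of_le hm with h | h
      · have hmn : m = n := h.symm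
        subst hmn
        have h1 : Q.coeff m = t ^ i := by
          rw [← hQdeg, Polynomial.coeff_natDegree, hQlc]
        have h2 : P.coeff m = 1 := by
          rw [← hPdeg]; exact hPm.coeff_natDegree
        rw [h1, h2, mul_one, sub_self]
      · have hmn : n < m := h
        rw [Polynomial.coeff_eq_zero_of_natDegree_lt (hQdeg ▸ hmn),
          Polynomial.coeff_eq_zero_of_natDegree_lt (hPdeg ▸ hmn), mul_zero, sub_self]
    have := hkey _ hdeg h0
    exact sub_eq_zero.1 this
  refine ⟨?_, part2⟩
  intro P Q hPm hPdeg hQm hQdeg hPa hQa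
  have := part2 P Q 0 hPm hPdeg hPa hQdeg (by rw [pow_zero]; exact hQm) hQa
  rw [pow_zero, Polynomial.C_1, one_mul] at this
  exact this.symm
end
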